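/- arXiv:2603.14846 — 4 statements merged into one kernel-verified Lean document; each statement's English description precedes it below -/
import Mathlib

section
/- Lemma (exponential counting bound): for every MP-GNN N there exists a constant c ∈ ℕ (depending only on N) such that for all n, N_dpower(n) ≤ 2^{c·(L_N(n)+1)}, i.e. the number of distinct vertex values N(G,v) over all graphs G ∈ 𝒢(n) and vertices v is at most exponential in the maximum total bit-length of the aggregation trace. -/
/-- Bit-length of a natural number: number of binary digits. -/
def bitlenNat (n : ℕ) : ℕ := Nat.size n

/-- Bit-length of an integer: number of binary digits of its absolute value. -/
def bitlenInt (z : ℤ) : ℕ := Nat.size z.natAbs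

/-- Bit-length of a rational (in lowest terms): bits of |numerator| plus bits of denominator. -/
def bitlenRat (q : ℚ) : ℕ := Nat.size q.num.natAbs + Nat.size q.den

/-- Bit-length of a vector of rationals: sum of entrywise bit-lengths. -/
def bitlenVec {d : ℕ} (x : Fin d → ℚ) : ℕ := ∑ i, bitlenRat (x i)

/-- A ReLU MLP with rational weights, as a nonempty sequence of affine layers;
all layers except the last are followed by an entrywise ReLU. -/
inductive MLP : ℕ → ℕ → Type
  | last {din dout : ℕ} (W : Matrix (Fin dout) (Fin din) ℚ) (b : Fin dout → ℚ) : MLP din dout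
  | cons {din dmid dout : ℕ} (W : Matrix (Fin dmid) (Fin din) ℚ) (b : Fin dmid → ℚ)
      (rest : MLP dmid dout) : MLP din dout

/-- Evaluation of a ReLU MLP. -/
def MLP.eval : {din dout : ℕ} → MLP din dout → (Fin din → ℚ) → Fin dout → ℚ
  | _, _, .last W b, x => W.mulVec x + b
  | _, _, .cons W b F, x => F.eval fun i => max ((W.mulVec x + b) i) 0

open Classical in
/-- The multiset of neighbors of `v` in `G`. -/
noncomputable def nbrs {n : ℕ} (G : SimpleGraph (Fin n)) (v : Fin n) : Multiset (Fin n) :=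
  (Finset.univ.filter fun w => G.Adj v w).val

/-- A Message-Passing GNN: layer `t+1` (for `0 ≤ t < m`) uses message MLP `msg t`,
aggregation `agg t` and combination MLP `mlp t`. -/
structure GNN where
  m : ℕ
  r : ℕ → ℕ
  p : ℕ → ℕ
  q : ℕ → ℕ
  msg : (t : ℕ) → MLP (r t + r t) (p t)
  agg : (t : ℕ) → Multiset (Fin (p t) → ℚ) → Fin (q t) → ℚ
  mlp : (t : ℕ) → MLP (r t + q t) (r (t + 1))

/-- The feature of vertex `v` after `t` layers, initial features all `1`. -/
noncomputable def GNN.feat (N : GNN) {n : ℕ} (G : SimpleGraph (Fin n)) :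
    (t : ℕ) → Fin n → Fin (N.r t) → ℚ
  | 0, _ => fun _ => 1
  | t + 1, v =>
      (N.mlp t).eval (Fin.append (N.feat G t v)
        (N.agg t ((nbrs G v).map fun w =>
          (N.msg t).eval (Fin.append (N.feat G t v) (N.feat G t w)))))

/-- The output of the `(t+1)`-st aggregation at vertex `v`. -/
noncomputable def GNN.aggOut (N : GNN) {n : ℕ} (G : SimpleGraph (Fin n)) (t : ℕ) (v : Fin n) :
    Fin (N.q t) → ℚ :=
  N.agg t ((nbrs G v).map fun w =>
    (N.msg t).eval (Fin.append (N.feat G t v) (N.feat G t w)))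

/-- The aggregation trace `I_N(G,v)`: the tuple of all aggregation outputs. -/
noncomputable def GNN.trace (N : GNN) {n : ℕ} (G : SimpleGraph (Fin n)) (v : Fin n) :
    (t : Fin N.m) → Fin (N.q t) → ℚ :=
  fun t => N.aggOut G t v

/-- The total bit-length of the aggregation trace `I_N(G,v)`. -/
noncomputable def GNN.traceBitlen (N : GNN) {n : ℕ} (G : SimpleGraph (Fin n)) (v : Fin n) : ℕ :=
  ∑ t : Fin N.m, bitlenVec (N.aggOut G t v)

/-- `L_N(n)`: maximum trace bit-length over graphs on `Fin n` and their vertices. -/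
noncomputable def GNN.L (N : GNN) (n : ℕ) : ℕ :=
  sSup { s | ∃ (G : SimpleGraph (Fin n)) (v : Fin n), s = N.traceBitlen G v }

/-- The final value `N(G,v)` of a vertex. -/
noncomputable def GNN.out (N : GNN) {n : ℕ} (G : SimpleGraph (Fin n)) (v : Fin n) :
    Fin (N.r N.m) → ℚ := N.feat G N.m v

/-- `N_dpower(n)`: number of distinct vertex values over all graphs on `Fin n`. -/
noncomputable def GNN.dpower (N : GNN) (n : ℕ) : ℕ :=
  Set.ncard { y : Fin (N.r N.m) → ℚ | ∃ (G : SimpleGraph (Fin n)) (v : Fin n), y = N.out G v }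

/-- `S_agg(n,k)`: max output bit-length of `agg` over size-`n` multisets of vectors
of bit-length at most `k`. -/
noncomputable def Sagg {d d' : ℕ} (agg : Multiset (Fin d → ℚ) → Fin d' → ℚ) (n k : ℕ) : ℕ :=
  sSup { s | ∃ M : Multiset (Fin d → ℚ),
    Multiset.card M = n ∧ (∀ x ∈ M, bitlenVec x ≤ k) ∧ s = bitlenVec (agg M) }

/-- `f(n) = O(log n)`. -/
def IsOLog (f : ℕ → ℕ) : Prop := ∃ C : ℕ, ∀ n, f n ≤ C * Nat.log 2 n + C

/-- `f(n) = o(n)`. -/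
def IsoLin (f : ℕ → ℕ) : Prop := ∀ ε : ℝ, 0 < ε → ∃ N₀ : ℕ, ∀ n ≥ N₀, (f n : ℝ) ≤ ε * n

/-- A logarithmic aggregation. -/
def LogarithmicAgg {d d' : ℕ} (agg : Multiset (Fin d → ℚ) → Fin d' → ℚ) : Prop :=
  ∀ f : ℕ → ℕ, IsOLog f → IsOLog fun n => Sagg agg n (f n)

/-- A sublinear aggregation. -/
def SublinearAgg {d d' : ℕ} (agg : Multiset (Fin d → ℚ) → Fin d' → ℚ) : Prop :=
  ∀ f : ℕ → ℕ, IsoLin f → IsoLin fun n => Sagg agg n (f n)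

/-- An MP-GNN together with a readout step `(mlp_R, agg_R)`. -/
structure GNNR extends GNN where
  qR : ℕ
  dR : ℕ
  aggR : Multiset (Fin (r m) → ℚ) → Fin qR → ℚ
  mlpR : MLP qR dR

/-- The graph-level output `N(G)`. -/
noncomputable def GNNR.gout (N : GNNR) {n : ℕ} (G : SimpleGraph (Fin n)) : Fin N.dR → ℚ :=
  N.mlpR.eval (N.aggR ((Finset.univ.val : Multiset (Fin n)).map fun v => N.toGNN.feat G N.toGNN.m v))

/-- `N_gdpower(n)`: number of distinct graph values over all graphs on `Fin n`. -/
noncomputable def GNNR.gdpower (N : GNNR) (n : ℕ) : ℕ :=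
  Set.ncard { y : Fin N.dR → ℚ | ∃ G : SimpleGraph (Fin n), y = N.gout G }

/-- The type of colors at level `t` of Color Refinement. -/
def Color : ℕ → Type
  | 0 => ℚ
  | t + 1 => Color t × Multiset (Color t)

/-- Color Refinement on a graph with all initial features `1`. -/
noncomputable def cr {n : ℕ} (G : SimpleGraph (Fin n)) : (t : ℕ) → Fin n → Color t
  | 0, _ => (1 : ℚ)
  | t + 1, v => (cr G t v, (nbrs G v).map (cr G t))

/-- `CR^t_dpower(n)`: number of distinct vertex colors after `t` rounds over graphs on `Fin n`. -/
noncomputable def CRdpower (t n : ℕ) : ℕ :=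
  Set.ncard { c : Color t | ∃ (G : SimpleGraph (Fin n)) (v : Fin n), c = cr G t v }

/-- `CR^t_gdpower(n)`: number of distinct graph colors after `t` rounds over graphs on `Fin n`. -/
noncomputable def CRgdpower (t n : ℕ) : ℕ :=
  Set.ncard { c : Multiset (Color t) | ∃ G : SimpleGraph (Fin n),
    c = (Finset.univ.val : Multiset (Fin n)).map (cr G t) }


/-- Reconstruct features from a sequence of aggregation outputs. -/
noncomputable def recFeat (N : GNN) (a : (s : ℕ) → Fin (N.q s) → ℚ) :
    (t : ℕ) → Fin (N.r t) → ℚ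
  | 0 => fun _ => 1
  | t + 1 => (N.mlp t).eval (Fin.append (recFeat N a t) (a t))

/-- The final value as a function of the trace. -/
noncomputable def Phi (N : GNN) (tr : (t : Fin N.m) → Fin (N.q t) → ℚ) :
    Fin (N.r N.m) → ℚ :=
  recFeat N (fun s => if h : s < N.m then tr ⟨s, h⟩ else 0) N.m

lemma recFeat_eq (N : GNN) {n : ℕ} (G : SimpleGraph (Fin n)) (v : Fin n) :
    ∀ t, t ≤ N.m →
      recFeat N (fun s => if h : s < N.m then N.trace G v ⟨s, h⟩ else 0) t = N.feat G t v := by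
  intro t
  induction t with
  | zero => intro _; rfl
  | succ t ih =>
      intro ht
      have ht' : t < N.m := ht
      simp only [recFeat, ih (Nat.le_of_lt ht'), ht', dif_pos]
      rfl

lemma Phi_trace (N : GNN) {n : ℕ} (G : SimpleGraph (Fin n)) (v : Fin n) :
    Phi N (N.trace G v) = N.out G v :=
  recFeat_eq N G v N.m le_rfl

/-- Exponential counting bound. -/
theorem dpower_le_exp_trace (N : GNN) :
    ∃ c : ℕ, ∀ n : ℕ, N.dpower n ≤ 2 ^ (c * (N.L n + 1)) := by
  classical
  set Q : ℕ := ∑ t : Fin N.m, N.q t with hQ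
  refine ⟨3 * Q, fun n => ?_⟩
  set L : ℕ := N.L n with hL
  -- the trace set
  set TS : Set ((t : Fin N.m) → Fin (N.q t) → ℚ) :=
    { tr | ∃ (G : SimpleGraph (Fin n)) (v : Fin n), tr = N.trace G v } with hTS
  -- the bounded set
  set T : Set ((t : Fin N.m) → Fin (N.q t) → ℚ) :=
    { tr | ∀ (t : Fin N.m) (i : Fin (N.q t)),
        (tr t i).num.natAbs < 2 ^ L ∧ (tr t i).den < 2 ^ L } with hT
  -- every traceBitlen is ≤ L
  have hbdd : ∀ (G : SimpleGraph (Fin n)) (v : Fin n), N.traceBitlen G v ≤ L := by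
    intro G v
    have hfin : { s | ∃ (G : SimpleGraph (Fin n)) (v : Fin n), s = N.traceBitlen G v }.Finite := by
      have : { s | ∃ (G : SimpleGraph (Fin n)) (v : Fin n), s = N.traceBitlen G v }
          ⊆ Set.range (fun p : SimpleGraph (Fin n) × Fin n => N.traceBitlen p.1 p.2) := by
        rintro s ⟨G, v, rfl⟩; exact ⟨(G, v), rfl⟩
      exact (Set.finite_range _).subset this
    exact le_csSup hfin.bddAbove ⟨G, v, rfl⟩
  -- traces are in T
  have hsub : TS ⊆ T := by
    rintro tr ⟨G, v, rfl⟩ t i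
    have h1 : bitlenVec (N.aggOut G t v) ≤ N.traceBitlen G v := by
      unfold GNN.traceBitlen
      exact Finset.single_le_sum (f := fun s : Fin N.m => bitlenVec (N.aggOut G (s : ℕ) v))
        (fun _ _ => Nat.zero_le _) (Finset.mem_univ t)
    have h2 : bitlenRat (N.aggOut G t v i) ≤ bitlenVec (N.aggOut G t v) := by
      unfold bitlenVec
      exact Finset.single_le_sum (f := fun j => bitlenRat (N.aggOut G (t : ℕ) v j))
        (fun _ _ => Nat.zero_le _) (Finset.mem_univ i)
    have h3 : bitlenRat (N.trace G v t i) ≤ L :=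
      le_trans (le_trans h2 h1) (hbdd G v)
    unfold bitlenRat at h3
    constructor
    · exact Nat.size_le.mp (le_trans (Nat.le_add_right _ _) h3)
    · exact Nat.size_le.mp (le_trans (Nat.le_add_left _ _) h3)
  -- injection from T into a finite type
  let tgt := (t : Fin N.m) → Fin (N.q t) → Fin (2 ^ (L + 1)) × Fin (2 ^ L)
  have hpow : (2 : ℕ) ^ (L + 1) = 2 ^ L * 2 := pow_succ 2 L
  let f : T → tgt := fun x t i =>
    (⟨((x.1 t i).num + (2 ^ L : ℕ)).toNat, by
        have := (x.2 t i).1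
        omega⟩,
     ⟨(x.1 t i).den, (x.2 t i).2⟩)
  have hf : Function.Injective f := by
    intro x y hxy
    apply Subtype.ext; funext t i
    have h := congrFun (congrFun hxy t) i
    simp only [f, Prod.mk.injEq, Fin.mk.injEq] at h
    have h1 := (x.2 t i).1
    have h2 := (y.2 t i).1
    refine Rat.ext ?_ h.2
    omega
  have htfin : T.Finite := by
    rw [Set.finite_coe_iff.symm]
    exact Finite.of_injective f hf
  -- cardinality bound on T
  have hcard : T.ncard ≤ 2 ^ (3 * Q * (L + 1)) := by
    have h1 : T.ncard = Nat.card T := Nat.card_coe_set_eq T ▸ rfl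
    have h2 : Nat.card T ≤ Nat.card tgt := Nat.card_le_card_of_injective f hf
    have h3 : Nat.card tgt = ∏ t : Fin N.m, (2 ^ (L + 1) * 2 ^ L) ^ (N.q t) := by
      simp [tgt, Nat.card_eq_fintype_card, Fintype.card_pi, Fintype.card_fun]
    have h4 : ∏ t : Fin N.m, ((2:ℕ) ^ (L + 1) * 2 ^ L) ^ (N.q t)
        = (2 ^ (2 * L + 1)) ^ Q := by
      rw [Finset.prod_pow_eq_pow_sum]
      congr 1
      rw [← pow_add]
      ring_nf
    have h5 : ((2:ℕ) ^ (2 * L + 1)) ^ Q = 2 ^ ((2 * L + 1) * Q) := by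
      rw [← pow_mul]
    have h6 : (2 * L + 1) * Q ≤ 3 * Q * (L + 1) := by nlinarith
    calc T.ncard = Nat.card T := h1
      _ ≤ Nat.card tgt := h2
      _ = 2 ^ ((2 * L + 1) * Q) := by rw [h3, h4, h5]
      _ ≤ 2 ^ (3 * Q * (L + 1)) := Nat.pow_le_pow_right (by norm_num) h6
  -- dpower ≤ ncard T
  have hTSfin : TS.Finite := htfin.subset hsub
  have himg : { y : Fin (N.r N.m) → ℚ | ∃ (G : SimpleGraph (Fin n)) (v : Fin n), y = N.out G v }
      ⊆ Phi N '' TS := by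
    rintro y ⟨G, v, rfl⟩
    exact ⟨N.trace G v, ⟨G, v, rfl⟩, Phi_trace N G v⟩
  calc N.dpower n ≤ (Phi N '' TS).ncard :=
        Set.ncard_le_ncard himg (hTSfin.image _)
    _ ≤ TS.ncard := Set.ncard_image_le hTSfin
    _ ≤ T.ncard := Set.ncard_le_ncard hsub htfin
    _ ≤ 2 ^ (3 * Q * (L + 1)) := hcard
end

section
/- Lower bound for two rounds of Color Refinement (vertex level): for every n ≥ 1, the number of distinct colors cr²_G(v) over all graphs G ∈ 𝒢(2n+1) and vertices v of G is at least the binomial coefficient C(2n−1, n−1), i.e. CR²_dpower(2n+1) ≥ C(2n−1, n−1). -/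
section CR2Aux

open Finset

/-- Extend `f : Fin n → Fin n` to `ℕ → ℕ`. -/
def Ffun (n : ℕ) (f : Fin n → Fin n) : ℕ → ℕ := fun i => if h : i < n then (f ⟨i, h⟩).val else 0

/-- Base (directed) relation for the construction. -/
def Rrel (n : ℕ) (F : ℕ → ℕ) (a b : ℕ) : Prop :=
  (a = 2*n ∧ b < n) ∨ (a < n ∧ n ≤ b ∧ b < 2*n ∧ b - n < F a)

/-- The graph realizing neighbor-degree multiset `{1 + f i}`. -/
def Gf (n : ℕ) (f : Fin n → Fin n) : SimpleGraph (Fin (2*n+1)) where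
  Adj x y := Rrel n (Ffun n f) x.val y.val ∨ Rrel n (Ffun n f) y.val x.val
  symm := ⟨fun _ _ h => Or.symm h⟩
  loopless := ⟨fun x h => by
    rcases h with (⟨h1, h2⟩ | ⟨h1, h2, h3, h4⟩) | (⟨h1, h2⟩ | ⟨h1, h2, h3, h4⟩) <;> omega⟩

def vtx (n : ℕ) : Fin (2*n+1) := ⟨2*n, by omega⟩

def emb (n : ℕ) (i : Fin n) : Fin (2*n+1) := ⟨i.val, by omega⟩

lemma emb_inj (n : ℕ) : Function.Injective (emb n) := by
  intro a b h
  simpa [emb, Fin.ext_iff] using h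

lemma adj_vtx (n : ℕ) (f : Fin n → Fin n) (y : Fin (2*n+1)) :
    (Gf n f).Adj (vtx n) y ↔ y.val < n := by
  show (Rrel n _ (2*n) y.val ∨ Rrel n _ y.val (2*n)) ↔ _
  unfold Rrel
  omega

lemma adj_u (n : ℕ) (f : Fin n → Fin n) (i : Fin n) (y : Fin (2*n+1)) :
    (Gf n f).Adj (emb n i) y ↔ y = vtx n ∨ (n ≤ y.val ∧ y.val - n < (f i).val) := by
  have hF : Ffun n f (emb n i).val = (f i).val := by
    simp [Ffun, emb, i.isLt]
  have hfi : (f i).val < n := (f i).isLt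
  have hi : (emb n i).val = i.val := rfl
  have hiv : i.val < n := i.isLt
  show (Rrel n (Ffun n f) (emb n i).val y.val ∨ Rrel n (Ffun n f) y.val (emb n i).val) ↔ _
  unfold Rrel
  rw [hF, hi]
  have hy : y = vtx n ↔ y.val = 2*n := by
    simp [vtx, Fin.ext_iff]
  rw [hy]
  omega

lemma nbrs_eq_of_iff {n : ℕ} (G : SimpleGraph (Fin n)) (v : Fin n) (s : Finset (Fin n))
    (h : ∀ y, G.Adj v y ↔ y ∈ s) : nbrs G v = s.val := by
  unfold nbrs
  congr 1
  ext y
  simp [Finset.mem_filter, h y]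

lemma nbrs_vtx (n : ℕ) (f : Fin n → Fin n) :
    nbrs (Gf n f) (vtx n) = Multiset.map (emb n) Finset.univ.val := by
  have h := nbrs_eq_of_iff (Gf n f) (vtx n) (Finset.univ.map ⟨emb n, emb_inj n⟩) ?_
  · rw [h, Finset.map_val]
    rfl
  · intro y
    rw [adj_vtx]
    simp only [Finset.mem_map, Finset.mem_univ, true_and, Function.Embedding.coeFn_mk]
    constructor
    · intro hy
      exact ⟨⟨y.val, hy⟩, by simp [emb]⟩
    · rintro ⟨i, rfl⟩
      exact i.isLt

lemma card_nbrs_u (n : ℕ) (f : Fin n → Fin n) (i : Fin n) :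
    Multiset.card (nbrs (Gf n f) (emb n i)) = 1 + (f i).val := by
  classical
  have hfi : (f i).val < n := (f i).isLt
  have hinj : Function.Injective (fun j : Fin (f i).val => (⟨n + j.val, by omega⟩ : Fin (2*n+1))) := by
    intro a b h
    simpa [Fin.ext_iff] using h
  have h := nbrs_eq_of_iff (Gf n f) (emb n i)
      (insert (vtx n) (Finset.univ.map ⟨fun j : Fin (f i).val => ⟨n + j.val, by omega⟩, hinj⟩)) ?_
  · rw [h]
    rw [show Multiset.card (insert (vtx n) (Finset.univ.map ⟨fun j : Fin (f i).val => (⟨n + j.val, by omega⟩ : Fin (2*n+1)), hinj⟩)).val = (insert (vtx n) (Finset.univ.map ⟨fun j : Fin (f i).val => (⟨n + j.val, by omega⟩ : Fin (2*n+1)), hinj⟩)).card from rfl]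
    have hnotmem : vtx n ∉
        (Finset.univ.map ⟨fun j : Fin (f i).val => (⟨n + j.val, by omega⟩ : Fin (2*n+1)), hinj⟩) := by
      simp only [Finset.mem_map, Finset.mem_univ, true_and, Function.Embedding.coeFn_mk]
      rintro ⟨j, hj⟩
      have := j.isLt
      have : n + j.val = 2*n := by simpa [vtx, Fin.ext_iff] using hj
      omega
    rw [Finset.card_insert_of_notMem hnotmem, Finset.card_map, Finset.card_univ,
      Fintype.card_fin]
    omega
  · intro y
    rw [adj_u]
    simp only [Finset.mem_insert, Finset.mem_map, Finset.mem_univ, true_and,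
      Function.Embedding.coeFn_mk]
    constructor
    · rintro (rfl | ⟨h1, h2⟩)
      · exact Or.inl rfl
      · exact Or.inr ⟨⟨y.val - n, h2⟩, by simp [Fin.ext_iff]; omega⟩
    · rintro (rfl | ⟨j, rfl⟩)
      · exact Or.inl rfl
      · have hj := j.isLt
        refine Or.inr ⟨by simp only []; omega, ?_⟩
        show (⟨n + j.val, _⟩ : Fin (2*n+1)).val - n < (f i).val
        simp only []
        omega

lemma cr_one {N : ℕ} (G : SimpleGraph (Fin N)) (v : Fin N) :
    cr G 1 v = ((1 : ℚ), Multiset.replicate (Multiset.card (nbrs G v)) (1 : ℚ)) := by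
  show (cr G 0 v, (nbrs G v).map (cr G 0)) = _
  have : (nbrs G v).map (cr G 0) = Multiset.replicate (Multiset.card (nbrs G v)) (1 : ℚ) := by
    have : (nbrs G v).map (cr G 0) = (nbrs G v).map (fun _ => (1 : ℚ)) := rfl
    rw [this, Multiset.map_const']
  rw [this]
  rfl

/-- Extract the neighbor-degree multiset from a level-2 color. -/
def theta : Color 2 → Multiset ℕ :=
  fun c => (c.2 : Multiset (Color 1)).map fun d => Multiset.card (d.2 : Multiset (Color 0))

lemma theta_cr2 {N : ℕ} (G : SimpleGraph (Fin N)) (v : Fin N) :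
    theta (cr G 2 v) = (nbrs G v).map fun w => Multiset.card (nbrs G w) := by
  have h2 : cr G 2 v = (cr G 1 v, (nbrs G v).map (cr G 1)) := rfl
  rw [h2]
  show ((nbrs G v).map (cr G 1)).map (fun d : Color 1 => Multiset.card d.2) = _
  rw [Multiset.map_map]
  apply Multiset.map_congr rfl
  intro w _
  simp only [Function.comp_apply, cr_one]
  exact Multiset.card_replicate _ _

lemma theta_Gf (n : ℕ) (f : Fin n → Fin n) :
    theta (cr (Gf n f) 2 (vtx n)) =
      Multiset.map (fun i : Fin n => 1 + (f i).val) Finset.univ.val := by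
  rw [theta_cr2, nbrs_vtx, Multiset.map_map]
  apply Multiset.map_congr rfl
  intro i _
  simp only [Function.comp_apply]
  exact card_nbrs_u n f i

lemma exists_fun_of_card {α : Type*} {n : ℕ} (m : Multiset α) (h : Multiset.card m = n) :
    ∃ f : Fin n → α, Multiset.map f Finset.univ.val = m := by
  have hlen : m.toList.length = n := by rw [Multiset.length_toList, h]
  refine ⟨fun i => m.toList.get (Fin.cast hlen.symm i), ?_⟩
  rw [Fin.univ_val_map]
  have : List.ofFn (fun i : Fin n => m.toList.get (Fin.cast hlen.symm i)) = m.toList := by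
    apply List.ext_get
    · simp [hlen]
    · intro i h1 h2
      simp [List.get_ofFn]
  rw [this, Multiset.coe_toList]

end CR2Aux

/-- Lower bound for two rounds of Color Refinement (vertex level). -/
theorem cr2_dpower_lower_bound (n : ℕ) (hn : 1 ≤ n) :
    Nat.choose (2 * n - 1) (n - 1) ≤ CRdpower 2 (2 * n + 1) := by
  classical
  set T : Set (Color 2) :=
    { c : Color 2 | ∃ (G : SimpleGraph (Fin (2*n+1))) (v : Fin (2*n+1)), c = cr G 2 v } with hT
  have hTdef : CRdpower 2 (2*n+1) = T.ncard := rfl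
  -- finiteness of T
  haveI : Finite (SimpleGraph (Fin (2*n+1))) :=
    Finite.of_injective (fun G => G.Adj) (fun G H h => SimpleGraph.ext h)
  have hTfin : T.Finite := by
    have : T ⊆ Set.range (fun p : SimpleGraph (Fin (2*n+1)) × Fin (2*n+1) => cr p.1 2 p.2) := by
      rintro c ⟨G, v, rfl⟩
      exact ⟨(G, v), rfl⟩
    exact (Set.finite_range _).subset this
  -- the image finset
  set Φ : (Fin n → Fin n) → Color 2 := fun f => cr (Gf n f) 2 (vtx n) with hΦ
  set A : Finset (Color 2) := Finset.image Φ Finset.univ with hA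
  have hsub : (↑A : Set (Color 2)) ⊆ T := by
    intro c hc
    simp only [hA, Finset.coe_image, Set.mem_image] at hc
    obtain ⟨f, _, rfl⟩ := hc
    exact ⟨Gf n f, vtx n, rfl⟩
  have h1 : A.card ≤ CRdpower 2 (2*n+1) := by
    rw [hTdef, ← Set.ncard_coe_finset A]
    exact Set.ncard_le_ncard hsub hTfin
  -- lower bound on A.card
  set g : Fin n → ℕ := fun x => 1 + x.val with hg
  have hginj : Function.Injective g := by
    intro a b h
    simp only [hg] at h
    exact Fin.ext (by omega)
  set μ : (Fin n → Fin n) → Multiset (Fin n) := fun f => Multiset.map f Finset.univ.val with hμ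
  have hθΦ : ∀ f : Fin n → Fin n, theta (Φ f) = Multiset.map g (μ f) := by
    intro f
    rw [hΦ, theta_Gf, hμ, Multiset.map_map]
    rfl
  have h2 : (Finset.image μ Finset.univ).card ≤ A.card := by
    calc (Finset.image μ Finset.univ).card
        = (Finset.image (Multiset.map g) (Finset.image μ Finset.univ)).card :=
          (Finset.card_image_of_injective _ (Multiset.map_injective hginj)).symm
      _ = (Finset.image (fun f => Multiset.map g (μ f)) Finset.univ).card := by
          rw [Finset.image_image]
          rfl
      _ = (Finset.image (fun f => theta (Φ f)) Finset.univ).card := by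
          congr 1
          apply Finset.image_congr
          intro f _
          exact (hθΦ f).symm
      _ = (Finset.image theta A).card := by
          rw [hA, Finset.image_image]
          rfl
      _ ≤ A.card := Finset.card_image_le
  -- image of μ is all multisets of card n
  have h3 : Finset.image μ Finset.univ
      = Finset.image (fun s : Sym (Fin n) n => (s : Multiset (Fin n))) Finset.univ := by
    apply Finset.ext
    intro m
    simp only [Finset.mem_image, Finset.mem_univ, true_and]
    constructor
    · rintro ⟨f, rfl⟩
      refine ⟨⟨μ f, ?_⟩, rfl⟩
      simp [hμ]
    · rintro ⟨s, rfl⟩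
      obtain ⟨f, hf⟩ := exists_fun_of_card (s : Multiset (Fin n)) s.prop
      exact ⟨f, hf⟩
  have h4 : (Finset.image μ Finset.univ).card = Fintype.card (Sym (Fin n) n) := by
    have hci : Function.Injective (fun s : Sym (Fin n) n => (s : Multiset (Fin n))) :=
      fun a b h => Subtype.ext h
    rw [h3, Finset.card_image_of_injective _ hci, Finset.card_univ]
  have h5 : Fintype.card (Sym (Fin n) n) = Nat.choose (2*n - 1) n := by
    rw [Sym.card_sym_eq_choose, Fintype.card_fin]
    congr 1
    omega
  have h6 : Nat.choose (2*n - 1) (n - 1) = Nat.choose (2*n - 1) n := by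
    have := Nat.choose_symm (show n ≤ 2*n - 1 by omega)
    rw [show 2*n - 1 - n = n - 1 by omega] at this
    omega
  omega
end

section
/- Lower bound for two rounds of Color Refinement (graph level): for every n ≥ 1, the number of distinct graph colors cr²(G) := ⟦cr²_G(v) : v ∈ V(G)⟧ over all graphs G ∈ 𝒢(2n+1) is at least the binomial coefficient C(2n−1, n−1), i.e. CR²_gdpower(2n+1) ≥ C(2n−1, n−1). -/
namespace CR2Aux
open Finset

/-- Degree of vertex `i` in the threshold graph with dominating set `T`. -/
def degT (T : Finset ℕ) (i : ℕ) : ℕ :=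
  (if i ∈ T then i else 0) + (T.filter fun j => i < j).card

/-- Degree multiset of the threshold graph on `m` vertices. -/
def DT (m : ℕ) (T : Finset ℕ) : Multiset ℕ := (Multiset.range m).map (degT T)

lemma degT_empty (i : ℕ) : degT ∅ i = 0 := by simp [degT]

lemma filter_card_le (T : Finset ℕ) (h : T.Nonempty) (i : ℕ) :
    (T.filter fun j => i < j).card ≤ T.max' h - i := by
  have hsub : (T.filter fun j => i < j) ⊆ Finset.Ioc i (T.max' h) := by
    intro j hj
    rw [mem_filter] at hj
    exact Finset.mem_Ioc.2 ⟨hj.2, Finset.le_max' _ _ hj.1⟩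
  calc (T.filter fun j => i < j).card ≤ (Finset.Ioc i (T.max' h)).card := card_le_card hsub
    _ = T.max' h - i := by rw [Nat.card_Ioc]

lemma degT_le (T : Finset ℕ) (h : T.Nonempty) (i : ℕ) : degT T i ≤ T.max' h := by
  have h2 := filter_card_le T h i
  by_cases hi : i ∈ T
  · have : i ≤ T.max' h := le_max' _ _ hi
    simp only [degT, if_pos hi]
    omega
  · simp only [degT, if_neg hi]
    omega

lemma degT_max (T : Finset ℕ) (h : T.Nonempty) : degT T (T.max' h) = T.max' h := by
  have : (T.filter fun j => T.max' h < j) = ∅ := by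
    apply filter_eq_empty_iff.2
    intro j hj
    exact not_lt.2 (le_max' _ _ hj)
  rw [degT, if_pos (T.max'_mem h), this, card_empty, add_zero]

lemma degT_erase_lt (T : Finset ℕ) (h : T.Nonempty) (i : ℕ) (hi : i < T.max' h) :
    degT T i = degT (T.erase (T.max' h)) i + 1 := by
  set M := T.max' h with hM
  have hmem : i ∈ T ↔ i ∈ T.erase M := by
    rw [mem_erase]; exact ⟨fun h' => ⟨Nat.ne_of_lt hi, h'⟩, fun h' => h'.2⟩
  have hfil : (T.filter fun j => i < j) = insert M ((T.erase M).filter fun j => i < j) := by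
    conv_lhs => rw [← Finset.insert_erase (T.max'_mem h)]
    rw [Finset.filter_insert, if_pos hi]
  have hnot : M ∉ (T.erase M).filter fun j => i < j := by
    simp [Finset.mem_filter]
  rw [degT, degT, hfil, card_insert_of_notMem hnot]
  by_cases hiT : i ∈ T
  · rw [if_pos hiT, if_pos (hmem.1 hiT)]; ring
  · rw [if_neg hiT, if_neg (fun h' => hiT (hmem.2 h'))]; ring



lemma degT_gt_max (T : Finset ℕ) (h : T.Nonempty) (i : ℕ) (hi : T.max' h < i) :
    degT T i = 0 := by
  have h1 : i ∉ T := fun hc => absurd (le_max' _ _ hc) (not_le.2 hi)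
  have h2 : (T.filter fun j => i < j) = ∅ := by
    apply filter_eq_empty_iff.2
    intro j hj
    have := le_max' _ _ hj
    omega
  simp [degT, h1, h2]

lemma degT_erase_ge (T : Finset ℕ) (h : T.Nonempty) (i : ℕ) (hi : T.max' h ≤ i) :
    degT (T.erase (T.max' h)) i = 0 := by
  set M := T.max' h
  have h1 : i ∉ T.erase M := by
    rw [mem_erase]
    rintro ⟨hne, hmem⟩
    have := le_max' _ _ hmem
    omega
  have h2 : ((T.erase M).filter fun j => i < j) = ∅ := by
    apply filter_eq_empty_iff.2
    intro j hj
    have := le_max' _ _ (Finset.mem_of_mem_erase hj)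
    omega
  simp [degT, h1, h2]

lemma max_mem_range (m : ℕ) (T : Finset ℕ) (h : T.Nonempty) (hsub : T ⊆ Finset.Ico 1 m) :
    T.max' h ∈ Multiset.range m := by
  have := hsub (T.max'_mem h)
  rw [Finset.mem_Ico] at this
  rw [Multiset.mem_range]
  exact this.2

lemma DT_cons (m : ℕ) (T : Finset ℕ) (h : T.Nonempty) (hsub : T ⊆ Finset.Ico 1 m) :
    DT m T = T.max' h ::ₘ ((Multiset.range m).erase (T.max' h)).map (degT T) := by
  set M := T.max' h
  have h0 : Multiset.range m = M ::ₘ (Multiset.range m).erase M :=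
    (Multiset.cons_erase (max_mem_range m T h hsub)).symm
  conv_lhs => rw [DT, h0]
  rw [Multiset.map_cons, degT_max]

lemma sup_DT (m : ℕ) (T : Finset ℕ) (h : T.Nonempty) (hsub : T ⊆ Finset.Ico 1 m) :
    (DT m T).sup = T.max' h := by
  apply le_antisymm
  · apply Multiset.sup_le.2
    intro a ha
    rw [DT, Multiset.mem_map] at ha
    obtain ⟨i, _, rfl⟩ := ha
    exact degT_le T h i
  · apply Multiset.le_sup
    rw [DT, Multiset.mem_map]
    exact ⟨T.max' h, max_mem_range m T h hsub, degT_max T h⟩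

lemma sup_DT_empty (m : ℕ) : (DT m ∅).sup = 0 := by
  apply le_antisymm _ (Nat.zero_le _)
  apply Multiset.sup_le.2
  intro a ha
  rw [DT, Multiset.mem_map] at ha
  obtain ⟨i, _, rfl⟩ := ha
  simp [degT_empty]

/-- Key recurrence: the degree multiset of `T.erase (max T)` is recoverable from that of `T`. -/
lemma DT_erase (m : ℕ) (T : Finset ℕ) (h : T.Nonempty) (hsub : T ⊆ Finset.Ico 1 m) :
    DT m (T.erase (T.max' h)) = 0 ::ₘ ((DT m T).erase (T.max' h)).map Nat.pred := by
  set M := T.max' h with hM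
  have hrange : Multiset.range m = M ::ₘ (Multiset.range m).erase M :=
    (Multiset.cons_erase (max_mem_range m T h hsub)).symm
  have hDT : (DT m T).erase M = ((Multiset.range m).erase M).map (degT T) := by
    rw [DT_cons m T h hsub, Multiset.erase_cons_head]
  have hmap : ((Multiset.range m).erase M).map (Nat.pred ∘ degT T)
      = ((Multiset.range m).erase M).map (degT (T.erase M)) := by
    apply Multiset.map_congr rfl
    intro i hi
    have hne : i ≠ M := ((Multiset.nodup_range m).mem_erase_iff.1 hi).1
    rcases lt_or_gt_of_ne hne with hlt | hgt
    · simp [Function.comp, degT_erase_lt T h i hlt, ← hM]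
    · have he : degT (T.erase M) i = 0 := degT_erase_ge T h i (le_of_lt hgt)
      simp [Function.comp, degT_gt_max T h i hgt, he]
  rw [hDT, Multiset.map_map, hmap]
  conv_lhs => rw [DT, hrange]
  rw [Multiset.map_cons, degT_erase_ge T h M le_rfl]

lemma DT_inj (m : ℕ) : ∀ (k : ℕ) (T₁ T₂ : Finset ℕ), T₁.card ≤ k →
    T₁ ⊆ Finset.Ico 1 m → T₂ ⊆ Finset.Ico 1 m → DT m T₁ = DT m T₂ → T₁ = T₂ := by
  intro k
  induction k with
  | zero =>
    intro T₁ T₂ hcard h1 h2 hD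
    have hT₁ : T₁ = ∅ := Finset.card_eq_zero.1 (Nat.le_zero.1 hcard)
    subst hT₁
    by_contra hne
    have h : T₂.Nonempty := Finset.nonempty_iff_ne_empty.2 (fun hc => hne hc.symm)
    have hpos : 1 ≤ T₂.max' h := (Finset.mem_Ico.1 (h2 (T₂.max'_mem h))).1
    have := sup_DT m T₂ h h2
    rw [← hD, sup_DT_empty] at this
    omega
  | succ k ih =>
    intro T₁ T₂ hcard h1 h2 hD
    rcases Finset.eq_empty_or_nonempty T₁ with rfl | hne₁
    · exact ih ∅ T₂ (by simp) h1 h2 hD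
    rcases Finset.eq_empty_or_nonempty T₂ with rfl | hne₂
    · have hpos : 1 ≤ T₁.max' hne₁ := (Finset.mem_Ico.1 (h1 (T₁.max'_mem hne₁))).1
      have := sup_DT m T₁ hne₁ h1
      rw [hD, sup_DT_empty] at this
      omega
    have hM : T₁.max' hne₁ = T₂.max' hne₂ := by
      rw [← sup_DT m T₁ hne₁ h1, ← sup_DT m T₂ hne₂ h2, hD]
    have hDe : DT m (T₁.erase (T₁.max' hne₁)) = DT m (T₂.erase (T₂.max' hne₂)) := by
      rw [DT_erase m T₁ hne₁ h1, DT_erase m T₂ hne₂ h2, hD, hM]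
    have hsub1 : T₁.erase (T₁.max' hne₁) ⊆ Finset.Ico 1 m := (Finset.erase_subset _ _).trans h1
    have hsub2 : T₂.erase (T₂.max' hne₂) ⊆ Finset.Ico 1 m := (Finset.erase_subset _ _).trans h2
    have hcard' : (T₁.erase (T₁.max' hne₁)).card ≤ k := by
      have h3 := Finset.card_erase_of_mem (T₁.max'_mem hne₁)
      have hpos := Finset.card_pos.2 hne₁
      omega
    have heq := ih _ _ hcard' hsub1 hsub2 hDe
    calc T₁ = insert (T₁.max' hne₁) (T₁.erase (T₁.max' hne₁)) :=
          (Finset.insert_erase (T₁.max'_mem hne₁)).symm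
      _ = insert (T₂.max' hne₂) (T₂.erase (T₂.max' hne₂)) := by rw [heq, hM]
      _ = T₂ := Finset.insert_erase (T₂.max'_mem hne₂)

end CR2Aux

section Part2
open Finset

namespace CR2Aux

/-- Threshold graph on `Fin m` with dominating positions `T`. -/
def Gg (m : ℕ) (T : Finset ℕ) : SimpleGraph (Fin m) where
  Adj v w := v ≠ w ∧ max v.val w.val ∈ T
  symm := ⟨fun v w h => ⟨h.1.symm, by rw [max_comm]; exact h.2⟩⟩
  loopless := ⟨fun v h => h.1 rfl⟩

lemma card_nbrs (m : ℕ) (T : Finset ℕ) (hsub : T ⊆ Finset.Ico 1 m) (v : Fin m) :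
    Multiset.card (nbrs (Gg m T) v) = degT T v.val := by
  classical
  have hval : Multiset.card (nbrs (Gg m T) v)
      = (Finset.univ.filter fun w => (Gg m T).Adj v w).card := rfl
  rw [hval]
  have hset : (Finset.univ.filter fun w => (Gg m T).Adj v w) =
      ((Finset.Iio v).filter fun _ => v.val ∈ T) ∪ ((Finset.Ioi v).filter fun w => w.val ∈ T) := by
    ext w
    simp only [Finset.mem_filter, Finset.mem_univ, true_and, Finset.mem_union,
      Finset.mem_Iio, Finset.mem_Ioi]
    constructor
    · rintro ⟨hne, hmax⟩
      rcases lt_or_gt_of_ne hne with hlt | hgt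
      · right
        have hv : v.val < w.val := hlt
        refine ⟨hlt, ?_⟩
        rwa [max_eq_right (le_of_lt hv)] at hmax
      · left
        have hv : w.val < v.val := hgt
        refine ⟨hgt, ?_⟩
        rwa [max_eq_left (le_of_lt hv)] at hmax
    · rintro (⟨hlt, hmem⟩ | ⟨hgt, hmem⟩)
      · have hv : w.val < v.val := hlt
        exact ⟨ne_of_gt hlt, by rwa [max_eq_left (le_of_lt hv)]⟩
      · have hv : v.val < w.val := hgt
        exact ⟨ne_of_lt hgt, by rwa [max_eq_right (le_of_lt hv)]⟩
  have hdisj : Disjoint ((Finset.Iio v).filter fun _ => v.val ∈ T)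
      ((Finset.Ioi v).filter fun w => w.val ∈ T) := by
    rw [Finset.disjoint_left]
    intro w hw hw'
    have h1 : w < v := Finset.mem_Iio.1 (Finset.mem_of_mem_filter _ hw)
    have h2 : v < w := Finset.mem_Ioi.1 (Finset.mem_of_mem_filter _ hw')
    exact absurd (h1.trans h2) (lt_irrefl w)
  rw [hset, Finset.card_union_of_disjoint hdisj]
  have hc1 : ((Finset.Iio v).filter fun _ => v.val ∈ T).card = if v.val ∈ T then v.val else 0 := by
    by_cases hv : v.val ∈ T
    · rw [if_pos hv, Finset.filter_true_of_mem fun _ _ => hv, Fin.card_Iio]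
    · rw [if_neg hv, Finset.filter_false_of_mem fun _ _ => hv, Finset.card_empty]
  have hc2 : ((Finset.Ioi v).filter fun w => w.val ∈ T).card
      = (T.filter fun j => v.val < j).card := by
    apply Finset.card_bij (fun w _ => w.val)
    · intro w hw
      rw [Finset.mem_filter] at hw ⊢
      exact ⟨hw.2, Fin.lt_def.1 (Finset.mem_Ioi.1 hw.1)⟩
    · intro w₁ _ w₂ _ h
      exact Fin.val_injective h
    · intro j hj
      rw [Finset.mem_filter] at hj
      have hjm : j < m := (Finset.mem_Ico.1 (hsub hj.1)).2
      refine ⟨⟨j, hjm⟩, ?_, rfl⟩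
      rw [Finset.mem_filter, Finset.mem_Ioi]
      exact ⟨Fin.lt_def.2 hj.2, hj.1⟩
  rw [hc1, hc2, degT]

lemma univ_val_map_val (m : ℕ) :
    (Finset.univ.val : Multiset (Fin m)).map Fin.val = Multiset.range m := by
  rw [Fin.univ_val_map]
  exact congrArg (fun l : List ℕ => (l : Multiset ℕ))
    (by rw [List.ofFn_eq_map]; exact List.ext_getElem (by simp) (by simp))

lemma nbrs_card_multiset (m : ℕ) (T : Finset ℕ) (hsub : T ⊆ Finset.Ico 1 m) :
    ((Finset.univ.val : Multiset (Fin m)).map fun v => Multiset.card (nbrs (Gg m T) v))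
      = DT m T := by
  calc ((Finset.univ.val : Multiset (Fin m)).map fun v => Multiset.card (nbrs (Gg m T) v))
      = (Finset.univ.val : Multiset (Fin m)).map fun v => degT T v.val :=
        Multiset.map_congr rfl fun v _ => card_nbrs m T hsub v
    _ = ((Finset.univ.val : Multiset (Fin m)).map Fin.val).map (degT T) := by
        rw [Multiset.map_map]; rfl
    _ = (Multiset.range m).map (degT T) := by rw [univ_val_map_val]
    _ = DT m T := rfl

/-- Extract the degree of a vertex from its 2-round CR color. -/
def deg2 (c : Color 2) : ℕ := Multiset.card c.1.2

lemma map_deg2 (m : ℕ) (G : SimpleGraph (Fin m)) :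
    Multiset.map deg2 ((Finset.univ.val : Multiset (Fin m)).map (cr G 2)) =
      (Finset.univ.val : Multiset (Fin m)).map fun v => Multiset.card (nbrs G v) := by
  rw [Multiset.map_map]
  apply Multiset.map_congr rfl
  intro v _
  show deg2 (cr G 2 v) = _
  have h2 : cr G 2 v = (cr G 1 v, (nbrs G v).map (cr G 1)) := rfl
  have h1 : cr G 1 v = ((1 : ℚ), (nbrs G v).map (cr G 0)) := rfl
  rw [deg2, h2]
  show Multiset.card (cr G 1 v).2 = _
  rw [h1]
  show Multiset.card ((nbrs G v).map (cr G 0)) = _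
  rw [Multiset.card_map]

end CR2Aux

end Part2

theorem cr2_gdpower_lower_bound' (n : ℕ) (hn : 1 ≤ n) :
    Nat.choose (2 * n - 1) (n - 1) ≤ CRgdpower 2 (2 * n + 1) := by
  classical
  set m := 2 * n + 1 with hm
  set 𝒞 : Set (Multiset (Color 2)) :=
    { c | ∃ G : SimpleGraph (Fin m), c = (Finset.univ.val : Multiset (Fin m)).map (cr G 2) }
    with h𝒞
  have hCR : CRgdpower 2 m = 𝒞.ncard := rfl
  have hfin : 𝒞.Finite := by
    have hr : 𝒞 = Set.range (fun G : SimpleGraph (Fin m) =>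
        (Finset.univ.val : Multiset (Fin m)).map (cr G 2)) := by
      ext c
      simp only [h𝒞, Set.mem_setOf_eq, Set.mem_range, eq_comm]
    rw [hr]
    exact Set.finite_range _
  set F : Finset ℕ → Multiset (Color 2) := fun T =>
    (Finset.univ.val : Multiset (Fin m)).map (cr (CR2Aux.Gg m T) 2) with hF
  have hinj : Set.InjOn F ↑((Finset.Ico 1 m).powerset) := by
    intro T₁ hT₁ T₂ hT₂ hFe
    rw [Finset.mem_coe, Finset.mem_powerset] at hT₁ hT₂
    apply CR2Aux.DT_inj m T₁.card T₁ T₂ le_rfl hT₁ hT₂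
    have hc := congrArg (Multiset.map CR2Aux.deg2) hFe
    rwa [hF, CR2Aux.map_deg2, CR2Aux.map_deg2, CR2Aux.nbrs_card_multiset m T₁ hT₁,
      CR2Aux.nbrs_card_multiset m T₂ hT₂] at hc
  have hsubset : F '' ↑((Finset.Ico 1 m).powerset) ⊆ 𝒞 := by
    rintro c ⟨T, _, rfl⟩
    exact ⟨CR2Aux.Gg m T, rfl⟩
  have hcard1 : (F '' ↑((Finset.Ico 1 m).powerset)).ncard = 2 ^ (2 * n) := by
    rw [Set.ncard_image_of_injOn hinj, Set.ncard_coe_finset, Finset.card_powerset,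
      Nat.card_Ico, hm, Nat.add_sub_cancel]
  have hle : 2 ^ (2 * n) ≤ CRgdpower 2 m := by
    rw [hCR, ← hcard1]
    exact Set.ncard_le_ncard hsubset hfin
  have hbin : Nat.choose (2 * n - 1) (n - 1) ≤ 2 ^ (2 * n) := by
    have h1 : Nat.choose (2 * n - 1) (n - 1)
        ≤ ∑ i ∈ Finset.range (2 * n - 1 + 1), Nat.choose (2 * n - 1) i :=
      Finset.single_le_sum (fun i _ => Nat.zero_le _) (Finset.mem_range.2 (by omega))
    rw [Nat.sum_range_choose] at h1
    exact h1.trans (Nat.pow_le_pow_right (by norm_num) (by omega))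
  exact hbin.trans hle

/-- Lower bound for two rounds of Color Refinement (graph level). -/
theorem cr2_gdpower_lower_bound (n : ℕ) (hn : 1 ≤ n) :
    Nat.choose (2 * n - 1) (n - 1) ≤ CRgdpower 2 (2 * n + 1) := by
  exact cr2_gdpower_lower_bound' n hn
end

section
/- Corollary (sublinear MP-GNNs fail to match CR²): for every MP-GNN N in which every aggregation is sublinear, there exist graphs G, G' whose vertices all carry the initial feature 1, and vertices v of G and v' of G', such that cr²_G(v) ≠ cr²_{G'}(v') but N(G,v) = N(G',v'); that is, two rounds of Color Refinement distinguish a pair of vertices that N does not distinguish. -/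
namespace SubGNN

lemma nat_size_mul (a b : ℕ) : Nat.size (a * b) ≤ Nat.size a + Nat.size b := by
  rcases Nat.eq_zero_or_pos a with rfl | ha
  · simp
  rcases Nat.eq_zero_or_pos b with rfl | hb
  · simp
  rw [Nat.size_le, pow_add]
  exact Nat.mul_lt_mul'' (Nat.lt_size_self a) (Nat.lt_size_self b)

lemma nat_size_add (a b : ℕ) : Nat.size (a + b) ≤ Nat.size a + Nat.size b + 1 := by
  rw [Nat.size_le]
  have h1 : a < 2 ^ Nat.size a := Nat.lt_size_self a
  have h2 : b < 2 ^ Nat.size b := Nat.lt_size_self b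
  have e1 : 2 ^ Nat.size a ≤ 2 ^ (Nat.size a + Nat.size b) :=
    Nat.pow_le_pow_right (by norm_num) (Nat.le_add_right _ _)
  have e2 : 2 ^ Nat.size b ≤ 2 ^ (Nat.size a + Nat.size b) :=
    Nat.pow_le_pow_right (by norm_num) (Nat.le_add_left _ _)
  have e3 : 2 ^ (Nat.size a + Nat.size b + 1) = 2 ^ (Nat.size a + Nat.size b) * 2 := by ring
  omega

lemma bitlenRat_pos (q : ℚ) : 1 ≤ bitlenRat q := by
  have : 0 < Nat.size q.den := Nat.size_pos.mpr q.pos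
  unfold bitlenRat; omega

lemma bitlenRat_zero : bitlenRat 0 = 1 := by
  simp [bitlenRat, Nat.size_one]

lemma bitlenRat_one : bitlenRat 1 = 2 := by
  simp [bitlenRat, Nat.size_one]

lemma bitlenRat_divInt_le (x y : ℤ) (hy : y ≠ 0) :
    bitlenRat (Rat.divInt x y) ≤ Nat.size x.natAbs + Nat.size y.natAbs := by
  rcases eq_or_ne x 0 with rfl | hx
  · rw [Rat.zero_divInt]
    have : 0 < Nat.size y.natAbs := Nat.size_pos.mpr (Int.natAbs_pos.mpr hy)
    rw [bitlenRat_zero]; omega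
  · have h1 : (Rat.divInt x y).num ∣ x := Rat.num_dvd x hy
    have h1' : (Rat.divInt x y).num.natAbs ≤ x.natAbs :=
      Nat.le_of_dvd (Int.natAbs_pos.mpr hx) (Int.natAbs_dvd_natAbs.mpr h1)
    have h2 : ((Rat.divInt x y).den : ℤ) ∣ y := Rat.den_dvd x y
    have h2' : (Rat.divInt x y).den ≤ y.natAbs :=
      Nat.le_of_dvd (Int.natAbs_pos.mpr hy) (Int.natCast_dvd_natCast.mp (Int.dvd_natAbs.mpr h2))
    exact Nat.add_le_add (Nat.size_le_size h1') (Nat.size_le_size h2')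

lemma bitlenRat_add (q r : ℚ) :
    bitlenRat (q + r) ≤ 2 * bitlenRat q + 2 * bitlenRat r + 2 := by
  have hq : ((q.den : ℤ) * (r.den : ℤ)) ≠ 0 := by
    simp [q.den_nz, r.den_nz]
  have heq := Rat.add_num_den q r
  have hb := bitlenRat_divInt_le (q.num * (r.den:ℤ) + (q.den:ℤ) * r.num) ((q.den : ℤ) * (r.den : ℤ)) hq
  rw [← heq] at hb
  have hnum : (q.num * (r.den:ℤ) + (q.den:ℤ) * r.num).natAbs ≤
      q.num.natAbs * r.den + q.den * r.num.natAbs := by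
    calc (q.num * (r.den:ℤ) + (q.den:ℤ) * r.num).natAbs
        ≤ (q.num * (r.den:ℤ)).natAbs + ((q.den:ℤ) * r.num).natAbs := Int.natAbs_add_le _ _
      _ = q.num.natAbs * r.den + q.den * r.num.natAbs := by
          simp [Int.natAbs_mul]
  have s1 : Nat.size (q.num * (r.den:ℤ) + (q.den:ℤ) * r.num).natAbs ≤
      Nat.size (q.num.natAbs * r.den) + Nat.size (q.den * r.num.natAbs) + 1 :=
    le_trans (Nat.size_le_size hnum) (nat_size_add _ _)
  have s2 := nat_size_mul q.num.natAbs r.den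
  have s3 := nat_size_mul q.den r.num.natAbs
  have s4 : Nat.size ((q.den : ℤ) * (r.den : ℤ)).natAbs ≤ Nat.size q.den + Nat.size r.den := by
    have : ((q.den : ℤ) * (r.den : ℤ)).natAbs = q.den * r.den := by
      simp [Int.natAbs_mul]
    rw [this]; exact nat_size_mul _ _
  unfold bitlenRat at *
  omega

lemma bitlenRat_mul (q r : ℚ) : bitlenRat (q * r) ≤ bitlenRat q + bitlenRat r := by
  have hq : ((q.den : ℤ) * (r.den : ℤ)) ≠ 0 := by simp [q.den_nz, r.den_nz]
  have heq : q * r = Rat.divInt (q.num * r.num) ((q.den : ℤ) * (r.den : ℤ)) := by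
    rw [← Rat.num_divInt_den q, ← Rat.num_divInt_den r, Rat.divInt_mul_divInt _ _]
    norm_num [Rat.num_divInt_den]
  have hb := bitlenRat_divInt_le (q.num * r.num) ((q.den : ℤ) * (r.den : ℤ)) hq
  rw [← heq] at hb
  have s1 : Nat.size (q.num * r.num).natAbs ≤ Nat.size q.num.natAbs + Nat.size r.num.natAbs := by
    rw [Int.natAbs_mul]; exact nat_size_mul _ _
  have s2 : Nat.size ((q.den : ℤ) * (r.den : ℤ)).natAbs ≤ Nat.size q.den + Nat.size r.den := by
    have : ((q.den : ℤ) * (r.den : ℤ)).natAbs = q.den * r.den := by simp [Int.natAbs_mul]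
    rw [this]; exact nat_size_mul _ _
  unfold bitlenRat at *
  omega

lemma bitlenRat_relu (q : ℚ) : bitlenRat (max q 0) ≤ bitlenRat q := by
  rcases le_total q 0 with h | h
  · rw [max_eq_right h, bitlenRat_zero]; exact bitlenRat_pos q
  · rw [max_eq_left h]

lemma bitlenRat_listSum (l : List ℚ) :
    bitlenRat l.sum ≤ 4 ^ l.length * ((l.map bitlenRat).sum + 1) := by
  induction l with
  | nil => simp [bitlenRat_zero]
  | cons a l ih =>
    have hP : 1 ≤ 4 ^ l.length := Nat.one_le_pow _ _ (by norm_num)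
    calc bitlenRat (a :: l).sum = bitlenRat (a + l.sum) := by simp
      _ ≤ 2 * bitlenRat a + 2 * bitlenRat l.sum + 2 := bitlenRat_add _ _
      _ ≤ 2 * bitlenRat a + 2 * (4 ^ l.length * ((l.map bitlenRat).sum + 1)) + 2 := by omega
      _ ≤ 4 ^ (a :: l).length * (((a :: l).map bitlenRat).sum + 1) := by
          simp only [List.length_cons, List.map_cons, List.sum_cons, pow_succ]
          nlinarith [hP, Nat.zero_le (bitlenRat a), Nat.zero_le ((l.map bitlenRat).sum)]

lemma bitlenRat_finSum {n : ℕ} (v : Fin n → ℚ) :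
    bitlenRat (∑ i, v i) ≤ 4 ^ n * ((∑ i, bitlenRat (v i)) + 1) := by
  have h1 : (∑ i, v i) = (List.ofFn v).sum := (List.sum_ofFn (f := v)).symm
  have h2 : ((List.ofFn v).map bitlenRat).sum = ∑ i, bitlenRat (v i) := by
    rw [List.map_ofFn]
    exact List.sum_ofFn
  have := bitlenRat_listSum (List.ofFn v)
  rw [List.length_ofFn] at this
  rw [h1]
  rw [← h2]
  exact this


lemma bitlenRat_le_bitlenVec {d : ℕ} (x : Fin d → ℚ) (i : Fin d) :
    bitlenRat (x i) ≤ bitlenVec x :=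
  Finset.single_le_sum (fun j _ => Nat.zero_le (bitlenRat (x j))) (Finset.mem_univ i)

lemma bitlenVec_relu {d : ℕ} (y : Fin d → ℚ) :
    bitlenVec (fun i => max (y i) 0) ≤ bitlenVec y :=
  Finset.sum_le_sum (fun i _ => bitlenRat_relu (y i))

lemma bitlenVec_append {a b : ℕ} (u : Fin a → ℚ) (v : Fin b → ℚ) :
    bitlenVec (Fin.append u v) = bitlenVec u + bitlenVec v := by
  unfold bitlenVec
  rw [Fin.sum_univ_add]
  simp [Fin.append_left, Fin.append_right]

lemma bitlenVec_ones {d : ℕ} : bitlenVec (fun _ : Fin d => (1 : ℚ)) = 2 * d := by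
  unfold bitlenVec
  simp [bitlenRat_one, Finset.sum_const, mul_comm]

lemma affine_bound {dI dO : ℕ} (W : Matrix (Fin dO) (Fin dI) ℚ) (b : Fin dO → ℚ) :
    ∃ C : ℕ, ∀ x : Fin dI → ℚ, bitlenVec (W.mulVec x + b) ≤ C * bitlenVec x + C := by
  classical
  set CW := Finset.univ.sup (fun p : Fin dO × Fin dI => bitlenRat (W p.1 p.2)) with hCW
  set Cb := Finset.univ.sup (fun i : Fin dO => bitlenRat (b i)) with hCb
  set K2 := 2 * 4 ^ dI * (dI * CW + 1) + 2 * Cb + 2 with hK2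
  refine ⟨dO * (2 * 4 ^ dI) + dO * K2, fun x => ?_⟩
  have entry : ∀ i, bitlenRat ((W.mulVec x + b) i) ≤ 2 * 4 ^ dI * bitlenVec x + K2 := by
    intro i
    have hmv : (W.mulVec x + b) i = (∑ j, W i j * x j) + b i := by
      simp [Matrix.mulVec, dotProduct]
    rw [hmv]
    have h2 : (∑ j, bitlenRat (W i j * x j)) ≤ dI * CW + bitlenVec x := by
      calc (∑ j, bitlenRat (W i j * x j)) ≤ ∑ j, (CW + bitlenRat (x j)) := by
            refine Finset.sum_le_sum (fun j _ => le_trans (bitlenRat_mul _ _) ?_)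
            have : bitlenRat (W i j) ≤ CW :=
              Finset.le_sup (f := fun p : Fin dO × Fin dI => bitlenRat (W p.1 p.2))
                (Finset.mem_univ (i, j))
            omega
        _ = dI * CW + bitlenVec x := by
            rw [Finset.sum_add_distrib, Finset.sum_const, Finset.card_univ, Fintype.card_fin,
              smul_eq_mul]
            rfl
    have h1 : bitlenRat (∑ j, W i j * x j) ≤ 4 ^ dI * (dI * CW + bitlenVec x + 1) := by
      refine le_trans (bitlenRat_finSum _) ?_
      have := h2
      gcongr
      
    have h3 : bitlenRat (b i) ≤ Cb :=
      Finset.le_sup (f := fun i : Fin dO => bitlenRat (b i)) (Finset.mem_univ i)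
    have h4 := bitlenRat_add (∑ j, W i j * x j) (b i)
    have h5 : 2 * (4 ^ dI * (dI * CW + bitlenVec x + 1)) =
        2 * 4 ^ dI * bitlenVec x + 2 * 4 ^ dI * (dI * CW + 1) := by ring
    omega
  calc bitlenVec (W.mulVec x + b) = ∑ i, bitlenRat ((W.mulVec x + b) i) := rfl
    _ ≤ ∑ _i : Fin dO, (2 * 4 ^ dI * bitlenVec x + K2) := Finset.sum_le_sum (fun i _ => entry i)
    _ = dO * (2 * 4 ^ dI * bitlenVec x) + dO * K2 := by
        rw [Finset.sum_const, Finset.card_univ, Fintype.card_fin, smul_eq_mul]; ring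
    _ ≤ (dO * (2 * 4 ^ dI) + dO * K2) * bitlenVec x + (dO * (2 * 4 ^ dI) + dO * K2) := by
        have expand : (dO * (2 * 4 ^ dI) + dO * K2) * bitlenVec x + (dO * (2 * 4 ^ dI) + dO * K2)
            = dO * (2 * 4 ^ dI * bitlenVec x) + dO * K2
              + (dO * K2 * bitlenVec x + dO * (2 * 4 ^ dI)) := by ring
        rw [expand]; omega

lemma mlp_bound {di dO : ℕ} (F : MLP di dO) :
    ∃ C : ℕ, ∀ x, bitlenVec (F.eval x) ≤ C * bitlenVec x + C := by
  induction F with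
  | last W b => exact affine_bound W b
  | cons W b rest ih =>
    obtain ⟨Ca, hCa⟩ := affine_bound W b
    obtain ⟨Cr, hCr⟩ := ih
    refine ⟨Cr * Ca + Cr, fun x => ?_⟩
    have h1 : bitlenVec (fun i => max ((W.mulVec x + b) i) 0) ≤ Ca * bitlenVec x + Ca :=
      le_trans (bitlenVec_relu _) (hCa x)
    calc bitlenVec (MLP.eval (.cons W b rest) x)
        = bitlenVec (rest.eval fun i => max ((W.mulVec x + b) i) 0) := rfl
      _ ≤ Cr * (bitlenVec fun i => max ((W.mulVec x + b) i) 0) + Cr := hCr _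
      _ ≤ Cr * (Ca * bitlenVec x + Ca) + Cr := by gcongr
      _ ≤ (Cr * Ca + Cr) * bitlenVec x + (Cr * Ca + Cr) := by
          nlinarith [Nat.zero_le (bitlenVec x)]

lemma finite_bitlenRat_le (B : ℕ) : {q : ℚ | bitlenRat q ≤ B}.Finite := by
  have hsub : (fun q : ℚ => (q.num, q.den)) '' {q | bitlenRat q ≤ B} ⊆
      (Set.Icc (-(2 ^ B : ℤ)) (2 ^ B)) ×ˢ (Set.Icc 0 (2 ^ B : ℕ)) := by
    rintro ⟨zn, zd⟩ ⟨q, hq, heq⟩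
    simp only [Set.mem_setOf_eq] at hq
    unfold bitlenRat at hq
    have hn : q.num.natAbs < 2 ^ B := Nat.size_le.mp (by omega)
    have hd : q.den < 2 ^ B := Nat.size_le.mp (by omega)
    have hn' : (q.num.natAbs : ℤ) < (2 ^ B : ℕ) := by exact_mod_cast hn
    have hcast : ((2 ^ B : ℕ) : ℤ) = (2 ^ B : ℤ) := by push_cast; rfl
    rw [Prod.ext_iff] at heq
    simp only at heq
    constructor
    · simp only [Set.mem_Icc, ← heq.1]
      constructor <;> omega
    · simp only [Set.mem_Icc, ← heq.2]
      omega
  have himg : ((fun q : ℚ => (q.num, q.den)) '' {q | bitlenRat q ≤ B}).Finite :=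
    Set.Finite.subset ((Set.finite_Icc _ _).prod (Set.finite_Icc _ _)) hsub
  refine Set.Finite.of_finite_image himg ?_
  intro q _ q' _ hqq
  rw [Prod.ext_iff] at hqq
  exact Rat.ext hqq.1 hqq.2

lemma finite_bitlenVec_le (d B : ℕ) : {x : Fin d → ℚ | bitlenVec x ≤ B}.Finite := by
  refine Set.Finite.subset (Set.Finite.pi (fun _ : Fin d => finite_bitlenRat_le B)) ?_
  intro x hx
  simp only [Set.mem_pi, Set.mem_univ, forall_true_left]
  intro i
  exact le_trans (bitlenRat_le_bitlenVec x i) hx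

lemma finite_multiset_card_mem {β : Type*} [DecidableEq β] {s : Set β} (hs : s.Finite) :
    ∀ n, {M : Multiset β | Multiset.card M = n ∧ ∀ x ∈ M, x ∈ s}.Finite
  | 0 => by
    refine Set.Finite.subset (Set.finite_singleton 0) ?_
    rintro M ⟨h1, _⟩
    simp [Multiset.card_eq_zero.mp h1]
  | (n + 1) => by
    have prev := finite_multiset_card_mem hs n
    refine Set.Finite.subset
      (Set.Finite.image (fun p : β × Multiset β => p.1 ::ₘ p.2) (hs.prod prev)) ?_
    rintro M ⟨hc, hm⟩
    have hpos : 0 < Multiset.card M := by omega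
    obtain ⟨x, hx⟩ := Multiset.card_pos_iff_exists_mem.mp hpos
    refine ⟨(x, M.erase x), ⟨hm x hx, ?_, ?_⟩, Multiset.cons_erase hx⟩
    · rw [Multiset.card_erase_of_mem hx, hc]; rfl
    · exact fun y hy => hm y (Multiset.mem_of_mem_erase hy)

lemma le_Sagg {d d' : ℕ} (agg : Multiset (Fin d → ℚ) → Fin d' → ℚ) (M : Multiset (Fin d → ℚ))
    (k : ℕ) (hel : ∀ x ∈ M, bitlenVec x ≤ k) :
    bitlenVec (agg M) ≤ Sagg agg (Multiset.card M) k := by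
  apply le_csSup
  · have hsub : {s | ∃ M' : Multiset (Fin d → ℚ), Multiset.card M' = Multiset.card M ∧
        (∀ x ∈ M', bitlenVec x ≤ k) ∧ s = bitlenVec (agg M')} ⊆
        (fun M' : Multiset (Fin d → ℚ) => bitlenVec (agg M')) ''
          {M' | Multiset.card M' = Multiset.card M ∧ ∀ x ∈ M', x ∈ {x | bitlenVec x ≤ k}} := by
      rintro s ⟨M', h1, h2, rfl⟩
      exact ⟨M', ⟨h1, h2⟩, rfl⟩
    exact Set.Finite.bddAbove (Set.Finite.subset
      (Set.Finite.image _ (finite_multiset_card_mem (finite_bitlenVec_le d k) _)) hsub)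
  · exact ⟨M, rfl, hel, rfl⟩

/-- running maximum -/
def fmax (f : ℕ → ℕ) (n : ℕ) : ℕ := (Finset.range (n + 1)).sup f

lemma le_fmax {f : ℕ → ℕ} {d n : ℕ} (h : d ≤ n) : f d ≤ fmax f n :=
  Finset.le_sup (Finset.mem_range.mpr (by omega))

lemma fmax_mono (f : ℕ → ℕ) : Monotone (fmax f) := fun a b h =>
  Finset.sup_mono (Finset.range_subset_range.mpr (by omega))

lemma isoLin_fmax {f : ℕ → ℕ} (hf : IsoLin f) : IsoLin (fmax f) := by
  intro ε hε
  obtain ⟨N₀, hN₀⟩ := hf ε hε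
  refine ⟨max N₀ (Nat.ceil ((fmax f N₀ : ℝ) / ε)), fun n hn => ?_⟩
  obtain ⟨d, hd, hEq⟩ := Finset.exists_mem_eq_sup (Finset.range (n + 1))
    Finset.nonempty_range_add_one f
  have hdn : d ≤ n := by
    have := Finset.mem_range.mp hd; omega
  have hfx : fmax f n = f d := hEq
  rw [hfx]
  rcases le_or_gt N₀ d with hc | hc
  · refine le_trans (hN₀ d hc) ?_
    have : (d : ℝ) ≤ n := by exact_mod_cast hdn
    nlinarith
  · have h1 : f d ≤ fmax f N₀ := le_fmax (by omega)
    have h2 : (fmax f N₀ : ℝ) ≤ ε * Nat.ceil ((fmax f N₀ : ℝ) / ε) := by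
      rw [← div_le_iff₀' hε]
      exact Nat.le_ceil _
    have h3 : (Nat.ceil ((fmax f N₀ : ℝ) / ε) : ℝ) ≤ n := by
      have : Nat.ceil ((fmax f N₀ : ℝ) / ε) ≤ n := le_trans (le_max_right _ _) hn
      exact_mod_cast this
    have h4 : (f d : ℝ) ≤ (fmax f N₀ : ℝ) := by exact_mod_cast h1
    nlinarith

lemma isoLin_const (c : ℕ) : IsoLin (fun _ => c) := by
  intro ε hε
  refine ⟨Nat.ceil ((c : ℝ) / ε), fun n hn => ?_⟩
  have h1 : (c : ℝ) ≤ ε * Nat.ceil ((c : ℝ) / ε) := by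
    rw [← div_le_iff₀' hε]; exact Nat.le_ceil _
  have h2 : (Nat.ceil ((c : ℝ) / ε) : ℝ) ≤ n := by exact_mod_cast hn
  nlinarith

lemma isoLin_add {f g : ℕ → ℕ} (hf : IsoLin f) (hg : IsoLin g) :
    IsoLin (fun n => f n + g n) := by
  intro ε hε
  obtain ⟨N₁, h₁⟩ := hf (ε / 2) (by positivity)
  obtain ⟨N₂, h₂⟩ := hg (ε / 2) (by positivity)
  refine ⟨max N₁ N₂, fun n hn => ?_⟩
  have a1 := h₁ n (le_trans (le_max_left _ _) hn)
  have a2 := h₂ n (le_trans (le_max_right _ _) hn)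
  push_cast
  nlinarith

lemma isoLin_cmul {f : ℕ → ℕ} (C : ℕ) (hf : IsoLin f) : IsoLin (fun n => C * f n) := by
  intro ε hε
  obtain ⟨N₀, h₀⟩ := hf (ε / (C + 1)) (by positivity)
  refine ⟨N₀, fun n hn => ?_⟩
  have := h₀ n hn
  have hC : (0:ℝ) ≤ C := by positivity
  have hn0 : (0:ℝ) ≤ n := by positivity
  push_cast
  have hCC : (C : ℝ) ≤ C + 1 := by linarith
  calc (C : ℝ) * f n ≤ ((C:ℝ) + 1) * (ε / ((C:ℝ) + 1) * n) := by nlinarith [Nat.cast_nonneg (α := ℝ) (f n)]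
    _ = ε * n := by field_simp
  
lemma isoLin_affine {f : ℕ → ℕ} (C : ℕ) (hf : IsoLin f) :
    IsoLin (fun n => C * f n + C) :=
  isoLin_add (isoLin_cmul C hf) (isoLin_const C)

lemma isoLin_comp5 {f : ℕ → ℕ} (hf : IsoLin f) : IsoLin (fun d => f (5 * d)) := by
  intro ε hε
  obtain ⟨N₀, h₀⟩ := hf (ε / 5) (by positivity)
  refine ⟨N₀, fun d hd => ?_⟩
  have := h₀ (5 * d) (by omega)
  push_cast at this ⊢
  nlinarith

lemma isoLin_sum : ∀ (m : ℕ) (F : ℕ → ℕ → ℕ), (∀ t < m, IsoLin (F t)) →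
    IsoLin (fun n => ∑ t ∈ Finset.range m, F t n)
  | 0, F, _ => by
    have he : (fun n => ∑ t ∈ Finset.range 0, F t n) = fun _ => 0 := by funext n; simp
    rw [he]; exact isoLin_const 0
  | (m + 1), F, h => by
    have prev := isoLin_sum m F (fun t ht => h t (by omega))
    have last := h m (by omega)
    have hadd := isoLin_add prev last
    have he : (fun n => ∑ t ∈ Finset.range (m+1), F t n)
        = fun n => (∑ t ∈ Finset.range m, F t n) + F m n := by
      funext n; rw [Finset.sum_range_succ]
    rw [he]; exact hadd

def famP (k : ℕ) (a : ℕ → ℕ) (x y : ℕ) : Prop :=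
  (x = 0 ∧ 1 ≤ y ∧ y ≤ k) ∨
  (1 ≤ x ∧ x ≤ k ∧ k + 1 ≤ y ∧ y ≤ 2 * k) ∨
  (1 ≤ x ∧ x ≤ k ∧ 2 * k + 1 ≤ y ∧ y ≤ 2 * k + 1 + a (x - 1)) ∨
  (k + 1 ≤ x ∧ k + 1 ≤ y)

def famG (k : ℕ) (a : ℕ → ℕ) : SimpleGraph (Fin (4 * k + 1)) where
  Adj x y := x ≠ y ∧ (famP k a x.val y.val ∨ famP k a y.val x.val)
  symm := by
    constructor
    rintro x y ⟨h1, h2⟩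
    exact ⟨Ne.symm h1, h2.symm⟩
  loopless := by constructor; rintro x ⟨h1, _⟩; exact h1 rfl

lemma famG_adj {k : ℕ} {a : ℕ → ℕ} {x y : Fin (4 * k + 1)} :
    (famG k a).Adj x y ↔ x ≠ y ∧ (famP k a x.val y.val ∨ famP k a y.val x.val) := Iff.rfl

lemma nbrs_root (k : ℕ) (hk : 1 ≤ k) (a : ℕ → ℕ) :
    nbrs (famG k a) ⟨0, by omega⟩ =
      ((Finset.Icc 1 k).attachFin
        (fun m hm => by simp only [Finset.mem_Icc] at hm; omega)).val := by
  unfold nbrs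
  congr 1
  ext y
  have hy := y.isLt
  simp only [Finset.mem_filter, Finset.mem_univ, true_and, Finset.mem_attachFin,
    Finset.mem_Icc, famG_adj, ne_eq, Fin.ext_iff, famP]
  generalize a (y.val - 1) = A
  generalize a (0 - 1) = A0
  omega

lemma nbrs_nbr (k : ℕ) (hk : 1 ≤ k) (a : ℕ → ℕ) (Ha : ∀ j, a j < 2 * k)
    (x : Fin (4 * k + 1)) (hx1 : 1 ≤ x.val) (hx2 : x.val ≤ k) :
    nbrs (famG k a) x =
      ((insert 0 (Finset.Icc (k + 1) (2 * k) ∪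
          Finset.Icc (2 * k + 1) (2 * k + 1 + a (x.val - 1)))).attachFin
        (fun m hm => by
          simp only [Finset.mem_insert, Finset.mem_union, Finset.mem_Icc] at hm
          have := Ha (x.val - 1); omega)).val := by
  unfold nbrs
  congr 1
  ext y
  have hy := y.isLt
  have hax := Ha (x.val - 1)
  have hay := Ha (y.val - 1)
  simp only [Finset.mem_filter, Finset.mem_univ, true_and, Finset.mem_attachFin,
    Finset.mem_insert, Finset.mem_union, Finset.mem_Icc, famG_adj, ne_eq, Fin.ext_iff, famP]
  generalize a (y.val - 1) = A at *
  generalize a (x.val - 1) = B at *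
  omega

lemma deg_root (k : ℕ) (hk : 1 ≤ k) (a : ℕ → ℕ) :
    Multiset.card (nbrs (famG k a) ⟨0, by omega⟩) = k := by
  rw [nbrs_root k hk a]
  show ((Finset.Icc 1 k).attachFin _).card = k
  rw [Finset.card_attachFin, Nat.card_Icc]
  omega

lemma deg_nbr (k : ℕ) (hk : 1 ≤ k) (a : ℕ → ℕ) (Ha : ∀ j, a j < 2 * k)
    (x : Fin (4 * k + 1)) (hx1 : 1 ≤ x.val) (hx2 : x.val ≤ k) :
    Multiset.card (nbrs (famG k a) x) = k + 2 + a (x.val - 1) := by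
  rw [nbrs_nbr k hk a Ha x hx1 hx2]
  rw [show ∀ (s : Finset (Fin (4*k+1))), Multiset.card s.val = s.card from fun _ => rfl]
  rw [Finset.card_attachFin]
  rw [Finset.card_insert_of_notMem (by
    simp only [Finset.mem_union, Finset.mem_Icc]; omega)]
  rw [Finset.card_union_of_disjoint (by
    rw [Finset.disjoint_left]
    intro b hb hb'
    simp only [Finset.mem_Icc] at hb hb'
    omega)]
  rw [Nat.card_Icc, Nat.card_Icc]
  omega

open Classical in
lemma deg_pool (k : ℕ) (hk : 1 ≤ k) (a : ℕ → ℕ) (v : Fin (4 * k + 1))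
    (hv : k + 1 ≤ v.val) :
    k ≤ Multiset.card (nbrs (famG k a) v) := by
  have hvlt := v.isLt
  have hsub : ((Finset.Icc (k + 1) (4 * k)).erase v.val).attachFin
      (fun m hm => by
        simp only [Finset.mem_erase, Finset.mem_Icc] at hm; omega) ⊆
      Finset.univ.filter (fun w => (famG k a).Adj v w) := by
    intro y hy
    simp only [Finset.mem_attachFin, Finset.mem_erase, Finset.mem_Icc] at hy
    simp only [Finset.mem_filter, Finset.mem_univ, true_and, famG_adj, ne_eq, Fin.ext_iff]
    refine ⟨by omega, Or.inl ?_⟩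
    unfold famP
    exact Or.inr (Or.inr (Or.inr ⟨by omega, by omega⟩))
  have hcard := Finset.card_le_card hsub
  rw [Finset.card_attachFin, Finset.card_erase_of_mem (by
    simp only [Finset.mem_Icc]; omega), Nat.card_Icc] at hcard
  show k ≤ (Finset.univ.filter (fun w => (famG k a).Adj v w)).card
  omega

open Classical in
lemma deg_ge (k : ℕ) (hk : 1 ≤ k) (a : ℕ → ℕ) (Ha : ∀ j, a j < 2 * k)
    (v : Fin (4 * k + 1)) :
    k ≤ Multiset.card (nbrs (famG k a) v) := by
  rcases Nat.lt_or_ge v.val 1 with hv | hv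
  · have hv0 : v = ⟨0, by omega⟩ := by
      apply Fin.ext
      show v.val = 0
      omega
    rw [hv0, deg_root k hk a]
  · rcases Nat.lt_or_ge v.val (k + 1) with hv2 | hv2
    · rw [deg_nbr k hk a Ha v hv (by omega)]; omega
    · exact deg_pool k hk a v hv2

open Classical in
lemma deg_le {n : ℕ} (G : SimpleGraph (Fin n)) (v : Fin n) :
    Multiset.card (nbrs G v) ≤ n := by
  show (Finset.univ.filter (fun w => G.Adj v w)).card ≤ n
  calc (Finset.univ.filter (fun w => G.Adj v w)).card ≤ Finset.univ.card :=
        Finset.card_filter_le _ _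
    _ = n := by simp

lemma map_deg_root (k : ℕ) (hk : 1 ≤ k) (a : ℕ → ℕ) (Ha : ∀ j, a j < 2 * k) :
    Multiset.map (fun w => Multiset.card (nbrs (famG k a) w)) (nbrs (famG k a) ⟨0, by omega⟩)
      = Multiset.map (fun j => k + 2 + a j) (Finset.range k).val := by
  rw [nbrs_root k hk a]
  show Multiset.map _ (Multiset.pmap _ (Finset.Icc 1 k).val _) = _
  rw [Multiset.map_pmap]
  have hcongr : Multiset.pmap
      (fun m (h : m < 4 * k + 1) => Multiset.card (nbrs (famG k a) ⟨m, h⟩))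
      (Finset.Icc 1 k).val (fun m hm => by
        simp only [Finset.mem_val, Finset.mem_Icc] at hm; omega)
      = Multiset.pmap (fun m (_ : m < 4 * k + 1) => k + 2 + a (m - 1)) (Finset.Icc 1 k).val
        (fun m hm => by simp only [Finset.mem_val, Finset.mem_Icc] at hm; omega) := by
    apply Multiset.pmap_congr
    intro m hm h1 h2
    have hm' : m ∈ Finset.Icc 1 k := hm
    simp only [Finset.mem_Icc] at hm'
    exact deg_nbr k hk a Ha ⟨m, h1⟩ hm'.1 hm'.2
  rw [hcongr, Multiset.pmap_eq_map]
  have himg : Finset.image (fun j => j + 1) (Finset.range k) = Finset.Icc 1 k := by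
    ext m
    simp only [Finset.mem_image, Finset.mem_range, Finset.mem_Icc]
    constructor
    · rintro ⟨j, hj, rfl⟩; omega
    · rintro ⟨h1, h2⟩; exact ⟨m - 1, by omega, by omega⟩
  rw [← himg, Finset.image_val_of_injOn (fun p _ q _ hpq => by omega), Multiset.map_map]
  apply Multiset.map_congr rfl
  intro j _
  simp only [Function.comp_apply, Nat.add_sub_cancel]

def colorCard : Color 1 → ℕ := fun c => Multiset.card ((c : ℚ × Multiset ℚ)).2

lemma card_snd_cr_one {n : ℕ} (G : SimpleGraph (Fin n)) (w : Fin n) :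
    colorCard (cr G 1 w) = Multiset.card (nbrs G w) := by
  show Multiset.card ((nbrs G w).map (cr G 0)) = _
  exact Multiset.card_map _ _

lemma cr2_determines (k : ℕ) (hk : 1 ≤ k) (a : ℕ → ℕ) (Ha : ∀ j, a j < 2 * k) :
    Multiset.map colorCard ((cr (famG k a) 2 ⟨0, by omega⟩ : Color 1 × Multiset (Color 1))).2
      = Multiset.map (fun j => k + 2 + a j) (Finset.range k).val := by
  have h2 : ((cr (famG k a) 2 ⟨0, by omega⟩ : Color 1 × Multiset (Color 1))).2
      = (nbrs (famG k a) ⟨0, by omega⟩).map (cr (famG k a) 1) := rfl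
  rw [h2, Multiset.map_map]
  have hfun : (colorCard ∘ cr (famG k a) 1)
      = fun w => Multiset.card (nbrs (famG k a) w) := by
    funext w
    exact card_snd_cr_one _ w
  rw [hfun]
  exact map_deg_root k hk a Ha

lemma cr2_inj (k : ℕ) (hk : 1 ≤ k) (a a' : ℕ → ℕ) (Ha : ∀ j, a j < 2 * k)
    (Ha' : ∀ j, a' j < 2 * k)
    (hcr : cr (famG k a) 2 ⟨0, by omega⟩ = cr (famG k a') 2 ⟨0, by omega⟩) :
    Multiset.map a (Finset.range k).val = Multiset.map a' (Finset.range k).val := by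
  have h := congrArg
    (fun c : Color 2 => Multiset.map colorCard ((c : Color 1 × Multiset (Color 1))).2) hcr
  simp only at h
  rw [cr2_determines k hk a Ha, cr2_determines k hk a' Ha'] at h
  have h2 := congrArg (Multiset.map (fun z => z - (k + 2))) h
  rw [Multiset.map_map, Multiset.map_map] at h2
  have e1 : ((fun z => z - (k + 2)) ∘ fun j => k + 2 + a j) = a := by
    funext j; simp only [Function.comp_apply]; omega
  have e2 : ((fun z => z - (k + 2)) ∘ fun j => k + 2 + a' j) = a' := by
    funext j; simp only [Function.comp_apply]; omega
  rwa [e1, e2] at h2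

noncomputable def aOf (k : ℕ) (S : Finset (Fin (2 * k))) : ℕ → ℕ := fun j =>
  if h : 0 < 2 * k then ((S.sort (· ≤ ·)).getD j ⟨0, h⟩).val else 0

lemma aOf_lt (k : ℕ) (hk : 1 ≤ k) (S : Finset (Fin (2 * k))) (j : ℕ) : aOf k S j < 2 * k := by
  unfold aOf
  rw [dif_pos (show 0 < 2 * k by omega)]
  exact ((S.sort (· ≤ ·)).getD j ⟨0, by omega⟩).isLt

lemma aOf_perm (k : ℕ) (hk : 1 ≤ k) (S : Finset (Fin (2 * k))) (hS : S.card = k) :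
    Multiset.map (aOf k S) (Finset.range k).val = Multiset.map Fin.val S.val := by
  have hl : (S.sort (· ≤ ·)).length = k := by rw [Finset.length_sort]; exact hS
  have hpos : 0 < 2 * k := by omega
  rw [Finset.range_val]
  have hrng : (Multiset.range k) = ((List.range k : List ℕ) : Multiset ℕ) := rfl
  rw [hrng, Multiset.map_coe]
  have hS' : S.val = ((S.sort (· ≤ ·) : List (Fin (2 * k))) : Multiset (Fin (2 * k))) :=
    (Finset.sort_eq ..).symm
  rw [hS', Multiset.map_coe]
  congr 1
  apply List.ext_getElem
  · simp [hl]
  · intro i h1 h2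
    simp only [List.getElem_map, List.getElem_range]
    unfold aOf
    rw [dif_pos hpos]
    congr 1
    exact List.getD_eq_getElem _ _ (by rw [hl]; simpa using h1)

lemma feat_eq (N : GNN) {n n' : ℕ} (G : SimpleGraph (Fin n)) (G' : SimpleGraph (Fin n'))
    (v : Fin n) (v' : Fin n') (m : ℕ)
    (hagg : ∀ t < m, N.aggOut G t v = N.aggOut G' t v') :
    ∀ t ≤ m, N.feat G t v = N.feat G' t v' := by
  intro t
  induction t with
  | zero => intro _; rfl
  | succ t ih =>
    intro ht
    have h1 := ih (by omega)
    show (N.mlp t).eval (Fin.append (N.feat G t v) (N.aggOut G t v)) = _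
    rw [h1, hagg t (by omega)]
    rfl

noncomputable def encR (B : ℕ) (q : ℚ) : Fin (2 ^ (B + 1)) × Fin (2 ^ B) :=
  if h : q.num.natAbs < 2 ^ B ∧ q.den < 2 ^ B then
    (⟨(q.num + (2 ^ B : ℕ)).toNat, by
      have e : (2 : ℕ) ^ (B + 1) = 2 ^ B * 2 := pow_succ 2 B
      have := h.1
      omega⟩, ⟨q.den, h.2⟩)
  else (⟨0, Nat.pow_pos (by norm_num)⟩, ⟨0, Nat.pow_pos (by norm_num)⟩)

lemma encR_inj (B : ℕ) (q q' : ℚ) (hq : bitlenRat q ≤ B) (hq' : bitlenRat q' ≤ B)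
    (h : encR B q = encR B q') : q = q' := by
  unfold bitlenRat at hq hq'
  have h1 : q.num.natAbs < 2 ^ B := Nat.size_le.mp (by omega)
  have h2 : q.den < 2 ^ B := Nat.size_le.mp (by omega)
  have h1' : q'.num.natAbs < 2 ^ B := Nat.size_le.mp (by omega)
  have h2' : q'.den < 2 ^ B := Nat.size_le.mp (by omega)
  unfold encR at h
  rw [dif_pos ⟨h1, h2⟩, dif_pos ⟨h1', h2'⟩] at h
  rw [Prod.ext_iff] at h
  obtain ⟨ha, hb⟩ := h
  rw [Fin.ext_iff] at ha hb
  simp only at ha hb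
  apply Rat.ext
  · omega
  · exact hb

noncomputable def BfeatF (N : GNN) (Cmsg Cmlp : ℕ → ℕ) : ℕ → ℕ → ℕ
  | 0, _ => 2 * N.r 0
  | (t + 1), n =>
      Cmlp t * (BfeatF N Cmsg Cmlp t n +
        fmax (fun d => Sagg (N.agg t) d
          (fmax (fun j => Cmsg t * (2 * BfeatF N Cmsg Cmlp t j) + Cmsg t) (5 * d))) n) + Cmlp t

noncomputable def BaggF (N : GNN) (Cmsg Cmlp : ℕ → ℕ) (t n : ℕ) : ℕ :=
  fmax (fun d => Sagg (N.agg t) d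
    (fmax (fun j => Cmsg t * (2 * BfeatF N Cmsg Cmlp t j) + Cmsg t) (5 * d))) n

lemma BfeatF_succ (N : GNN) (Cmsg Cmlp : ℕ → ℕ) (t n : ℕ) :
    BfeatF N Cmsg Cmlp (t + 1) n
      = Cmlp t * (BfeatF N Cmsg Cmlp t n + BaggF N Cmsg Cmlp t n) + Cmlp t := rfl

lemma isoLin_BaggF (N : GNN) (Cmsg Cmlp : ℕ → ℕ) (t : ℕ)
    (hsub : SublinearAgg (N.agg t)) (hfeat : IsoLin (fun n => BfeatF N Cmsg Cmlp t n)) :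
    IsoLin (fun n => BaggF N Cmsg Cmlp t n) := by
  have hmsg : IsoLin (fun j => Cmsg t * (2 * BfeatF N Cmsg Cmlp t j) + Cmsg t) :=
    isoLin_affine (Cmsg t) (isoLin_cmul 2 hfeat)
  have hfhat : IsoLin (fun d =>
      fmax (fun j => Cmsg t * (2 * BfeatF N Cmsg Cmlp t j) + Cmsg t) (5 * d)) :=
    isoLin_comp5 (isoLin_fmax hmsg)
  exact isoLin_fmax (hsub _ hfhat)

lemma isoLin_BfeatF (N : GNN) (Cmsg Cmlp : ℕ → ℕ) (m : ℕ)
    (hsub : ∀ t < m, SublinearAgg (N.agg t)) :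
    ∀ t, t ≤ m → IsoLin (fun n => BfeatF N Cmsg Cmlp t n) := by
  intro t
  induction t with
  | zero => intro _; exact isoLin_const _
  | succ t ih =>
    intro ht
    have hfeat := ih (by omega)
    have hBagg := isoLin_BaggF N Cmsg Cmlp t (hsub t (by omega)) hfeat
    have := isoLin_affine (Cmlp t) (isoLin_add hfeat hBagg)
    exact this

set_option maxHeartbeats 1000000 in
lemma aggOut_bound (N : GNN) (Cmsg Cmlp : ℕ → ℕ)
    (hCmsg : ∀ t x, bitlenVec ((N.msg t).eval x) ≤ Cmsg t * bitlenVec x + Cmsg t)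
    (k : ℕ) (hk : 1 ≤ k) (G : SimpleGraph (Fin (4 * k + 1)))
    (hdeg : ∀ v, k ≤ Multiset.card (nbrs G v)) (t : ℕ)
    (hfeat : ∀ v, bitlenVec (N.feat G t v) ≤ BfeatF N Cmsg Cmlp t (4 * k + 1)) :
    ∀ v, bitlenVec (N.aggOut G t v) ≤ BaggF N Cmsg Cmlp t (4 * k + 1) := by
  intro v
  have hdn : Multiset.card (nbrs G v) ≤ 4 * k + 1 := deg_le G v
  have hn5d : 4 * k + 1 ≤ 5 * Multiset.card (nbrs G v) := by
    have := hdeg v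
    omega
  set msgf := fun j => Cmsg t * (2 * BfeatF N Cmsg Cmlp t j) + Cmsg t with hmsgf
  set M := (nbrs G v).map
    (fun w => (N.msg t).eval (Fin.append (N.feat G t v) (N.feat G t w))) with hM
  have hcM : Multiset.card M = Multiset.card (nbrs G v) := Multiset.card_map _ _
  have hel : ∀ x ∈ M, bitlenVec x ≤ fmax msgf (5 * Multiset.card (nbrs G v)) := by
    intro x hx
    obtain ⟨w, hw, rfl⟩ := Multiset.mem_map.mp hx
    calc bitlenVec ((N.msg t).eval (Fin.append (N.feat G t v) (N.feat G t w)))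
        ≤ Cmsg t * bitlenVec (Fin.append (N.feat G t v) (N.feat G t w)) + Cmsg t :=
          hCmsg t _
      _ = Cmsg t * (bitlenVec (N.feat G t v) + bitlenVec (N.feat G t w)) + Cmsg t := by
          rw [bitlenVec_append]
      _ ≤ Cmsg t * (2 * BfeatF N Cmsg Cmlp t (4 * k + 1)) + Cmsg t := by
          have h1 := hfeat v
          have h2 := hfeat w
          gcongr
          omega
      _ = msgf (4 * k + 1) := rfl
      _ ≤ fmax msgf (5 * Multiset.card (nbrs G v)) := le_fmax hn5d
  have hS := le_Sagg (N.agg t) M (fmax msgf (5 * Multiset.card (nbrs G v))) hel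
  rw [hcM] at hS
  calc bitlenVec (N.aggOut G t v) = bitlenVec (N.agg t M) := rfl
    _ ≤ Sagg (N.agg t) (Multiset.card (nbrs G v))
          (fmax msgf (5 * Multiset.card (nbrs G v))) := hS
    _ ≤ fmax (fun d' => Sagg (N.agg t) d' (fmax msgf (5 * d'))) (4 * k + 1) :=
          le_fmax (f := fun d' => Sagg (N.agg t) d' (fmax msgf (5 * d'))) hdn
    _ = BaggF N Cmsg Cmlp t (4 * k + 1) := rfl

lemma feat_bound (N : GNN) (Cmsg Cmlp : ℕ → ℕ)
    (hCmsg : ∀ t x, bitlenVec ((N.msg t).eval x) ≤ Cmsg t * bitlenVec x + Cmsg t)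
    (hCmlp : ∀ t x, bitlenVec ((N.mlp t).eval x) ≤ Cmlp t * bitlenVec x + Cmlp t)
    (k : ℕ) (hk : 1 ≤ k) (G : SimpleGraph (Fin (4 * k + 1)))
    (hdeg : ∀ v, k ≤ Multiset.card (nbrs G v)) :
    ∀ t v, bitlenVec (N.feat G t v) ≤ BfeatF N Cmsg Cmlp t (4 * k + 1) := by
  intro t
  induction t with
  | zero =>
    intro v
    show bitlenVec (fun _ => (1 : ℚ)) ≤ _
    rw [bitlenVec_ones]
    exact le_refl _
  | succ t ih =>
    intro v
    have hagg := aggOut_bound N Cmsg Cmlp hCmsg k hk G hdeg t ih v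
    calc bitlenVec (N.feat G (t + 1) v)
        = bitlenVec ((N.mlp t).eval (Fin.append (N.feat G t v) (N.aggOut G t v))) := rfl
      _ ≤ Cmlp t * bitlenVec (Fin.append (N.feat G t v) (N.aggOut G t v)) + Cmlp t :=
          hCmlp t _
      _ = Cmlp t * (bitlenVec (N.feat G t v) + bitlenVec (N.aggOut G t v)) + Cmlp t := by
          rw [bitlenVec_append]
      _ ≤ Cmlp t * (BfeatF N Cmsg Cmlp t (4 * k + 1) + BaggF N Cmsg Cmlp t (4 * k + 1))
            + Cmlp t := by
          have h1 := ih v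
          gcongr
      _ = BfeatF N Cmsg Cmlp (t + 1) (4 * k + 1) := (BfeatF_succ N Cmsg Cmlp t _).symm

lemma card_T (m : ℕ) (qf : Fin m → ℕ) (B : ℕ) :
    Fintype.card ((t : Fin m) → Fin (qf t) → Fin (2 ^ (B + 1)) × Fin (2 ^ B))
      = 2 ^ ((2 * B + 1) * ∑ t, qf t) := by
  rw [Fintype.card_pi]
  have hstep : ∀ t : Fin m, Fintype.card (Fin (qf t) → Fin (2 ^ (B + 1)) × Fin (2 ^ B))
      = 2 ^ ((2 * B + 1) * qf t) := by
    intro t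
    rw [Fintype.card_fun, Fintype.card_prod, Fintype.card_fin, Fintype.card_fin,
      Fintype.card_fin, ← pow_add, ← pow_mul]
    congr 1
    ring
  calc (∏ t, Fintype.card (Fin (qf t) → Fin (2 ^ (B + 1)) × Fin (2 ^ B)))
      = ∏ t, 2 ^ ((2 * B + 1) * qf t) := Finset.prod_congr rfl (fun t _ => hstep t)
    _ = 2 ^ (∑ t, (2 * B + 1) * qf t) := Finset.prod_pow_eq_pow_sum _ _ _
    _ = 2 ^ ((2 * B + 1) * ∑ t, qf t) := by rw [← Finset.mul_sum]

end SubGNN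

set_option maxHeartbeats 3000000 in
/-- Sublinear MP-GNNs fail to match CR². -/
theorem sublinear_fails_to_match_cr2 (N : GNN) (h : ∀ t < N.m, SublinearAgg (N.agg t)) :
    ∃ (n n' : ℕ) (G : SimpleGraph (Fin n)) (G' : SimpleGraph (Fin n'))
      (v : Fin n) (v' : Fin n'),
      cr G 2 v ≠ cr G' 2 v' ∧ N.out G v = N.out G' v' := by
  classical
  open SubGNN in
  choose Cmsg hCmsg using fun t => SubGNN.mlp_bound (N.msg t)
  choose Cmlp hCmlp using fun t => SubGNN.mlp_bound (N.mlp t)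
  set D := ∑ t : Fin N.m, N.q t with hD
  set Btr := fun n => ∑ t ∈ Finset.range N.m, SubGNN.BaggF N Cmsg Cmlp t n with hBtr
  have hBtrIso : IsoLin Btr := by
    apply SubGNN.isoLin_sum N.m
    intro t ht
    exact SubGNN.isoLin_BaggF N Cmsg Cmlp t (h t ht)
      (SubGNN.isoLin_BfeatF N Cmsg Cmlp N.m h t (le_of_lt ht))
  have hε : (0:ℝ) < 1 / (40 * ((D:ℝ) + 1)) := by positivity
  obtain ⟨N₀, hN₀⟩ := hBtrIso (1 / (40 * ((D:ℝ) + 1))) hε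
  set k := N₀ + 4 * D + 4 with hkdef
  have hk1 : 1 ≤ k := by omega
  set B := Btr (4 * k + 1) with hB
  have hBbound : (B : ℝ) ≤ (1 / (40 * ((D:ℝ) + 1))) * (4 * k + 1 : ℕ) := hN₀ _ (by omega)
  -- key arithmetic bound
  have key : (2 * B + 1) * D ≤ k := by
    have h40 : (0:ℝ) < 40 * ((D:ℝ) + 1) := by positivity
    have hB2 : (B:ℝ) * (40 * ((D:ℝ) + 1)) ≤ 4 * (k:ℝ) + 1 := by
      rw [one_div, inv_mul_eq_div, le_div_iff₀ h40] at hBbound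
      calc (B:ℝ) * (40 * ((D:ℝ) + 1)) ≤ ((4 * k + 1 : ℕ) : ℝ) := hBbound
        _ = 4 * (k:ℝ) + 1 := by push_cast; ring
    have hkD : 4 * (D:ℝ) + 4 ≤ (k:ℝ) := by
      have : 4 * D + 4 ≤ k := by omega
      exact_mod_cast this
    have hB0 : (0:ℝ) ≤ (B:ℝ) := Nat.cast_nonneg _
    have hD0 : (0:ℝ) ≤ (D:ℝ) := Nat.cast_nonneg _
    have goalR : ((2 * B + 1) * D : ℝ) ≤ (k : ℝ) := by nlinarith
    exact_mod_cast goalR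
  -- the family and pigeonhole
  have hroot : (0:ℕ) < 4 * k + 1 := by omega
  set root : Fin (4 * k + 1) := ⟨0, hroot⟩ with hroot'
  set GS : Finset (Fin (2 * k)) → SimpleGraph (Fin (4 * k + 1)) :=
    fun S => SubGNN.famG k (SubGNN.aOf k S) with hGS
  have htrace_bound : ∀ (S : Finset (Fin (2 * k))) (t : Fin N.m) (i : Fin (N.q t)),
      bitlenRat (N.aggOut (GS S) t root i) ≤ B := by
    intro S t i
    have hdeg : ∀ v, k ≤ Multiset.card (nbrs (GS S) v) :=
      SubGNN.deg_ge k hk1 _ (SubGNN.aOf_lt k hk1 S)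
    have hf := SubGNN.feat_bound N Cmsg Cmlp hCmsg hCmlp k hk1 (GS S) hdeg t
    have ha := SubGNN.aggOut_bound N Cmsg Cmlp hCmsg k hk1 (GS S) hdeg t hf root
    have hsum : SubGNN.BaggF N Cmsg Cmlp t (4 * k + 1) ≤ B := by
      rw [hB, hBtr]
      exact Finset.single_le_sum (f := fun t' => SubGNN.BaggF N Cmsg Cmlp t' (4 * k + 1))
        (fun _ _ => Nat.zero_le _) (Finset.mem_range.mpr t.isLt)
    exact le_trans (SubGNN.bitlenRat_le_bitlenVec _ i) (le_trans ha hsum)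
  have hTcard := SubGNN.card_T N.m (fun t => N.q t) B
  have hαcard : Fintype.card {S : Finset (Fin (2 * k)) // S.card = k} = (2 * k).choose k := by
    rw [Fintype.card_finset_len, Fintype.card_fin]
  have hlt : Fintype.card ((t : Fin N.m) → Fin (N.q t) → Fin (2 ^ (B + 1)) × Fin (2 ^ B))
      < Fintype.card {S : Finset (Fin (2 * k)) // S.card = k} := by
    rw [hTcard, hαcard]
    have h4 : 4 ^ k < k * Nat.centralBinom k :=
      Nat.four_pow_lt_mul_centralBinom k (by omega)
    have hk2 : k < 2 ^ k := Nat.lt_two_pow_self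
    have hexp : (2:ℕ) ^ ((2 * B + 1) * D) ≤ 2 ^ k := Nat.pow_le_pow_right (by norm_num) key
    have hmul : k * 2 ^ ((2 * B + 1) * D) < k * Nat.centralBinom k := by
      have hp : 0 < 2 ^ k := Nat.pow_pos (by norm_num)
      calc k * 2 ^ ((2 * B + 1) * D) ≤ k * 2 ^ k := Nat.mul_le_mul_left k hexp
        _ < 2 ^ k * 2 ^ k := by exact Nat.mul_lt_mul_of_lt_of_le hk2 (le_refl _) hp
        _ = 4 ^ k := by
            rw [← pow_add, show (4:ℕ) = 2 ^ 2 from rfl, ← pow_mul]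
            congr 1
            ring
        _ < k * Nat.centralBinom k := h4
    have hfin := Nat.lt_of_mul_lt_mul_left hmul
    simpa [Nat.centralBinom] using hfin
  obtain ⟨S1, S2, hne, hfeq⟩ := Fintype.exists_ne_map_eq_of_card_lt
    (fun (S : {S : Finset (Fin (2 * k)) // S.card = k}) (t : Fin N.m) (i : Fin (N.q t)) =>
      SubGNN.encR B (N.aggOut (GS S.1) t root i)) hlt
  have haggeq : ∀ t < N.m, N.aggOut (GS S1.1) t root = N.aggOut (GS S2.1) t root := by
    intro t ht
    funext i
    have hcf := congrFun (congrFun hfeq ⟨t, ht⟩) i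
    exact SubGNN.encR_inj B _ _ (htrace_bound S1.1 ⟨t, ht⟩ i) (htrace_bound S2.1 ⟨t, ht⟩ i) hcf
  have hout : N.out (GS S1.1) root = N.out (GS S2.1) root :=
    SubGNN.feat_eq N _ _ root root N.m haggeq N.m (le_refl _)
  have hcr : cr (GS S1.1) 2 root ≠ cr (GS S2.1) 2 root := by
    intro hcontra
    have hmm := SubGNN.cr2_inj k hk1 _ _ (SubGNN.aOf_lt k hk1 S1.1) (SubGNN.aOf_lt k hk1 S2.1)
      hcontra
    rw [SubGNN.aOf_perm k hk1 S1.1 S1.2, SubGNN.aOf_perm k hk1 S2.1 S2.2] at hmm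
    exact hne (Subtype.ext (Finset.val_inj.mp (Multiset.map_injective Fin.val_injective hmm)))
  exact ⟨_, _, GS S1.1, GS S2.1, root, root, hcr, hout⟩
end
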